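/- arXiv:2304.00193 — 13 statements merged into one kernel-verified Lean document; each statement's English description precedes it below -/
import Mathlib

section
/- Let ι > 0 and g > 0. Let p, u, d, z : ℝ → ℝ³ with p twice differentiable, d and z differentiable, such that for all t: (i) p''(t) = g·e₃ + u(t) + d(t) (translational quadrotor model with lumped disturbance d), and (ii) z'(t) = -ι (z(t) + ι p'(t) + g·e₃ + u(t)) (disturbance observer). Define the disturbance estimate d̂(t) = z(t) + ι p'(t) and the estimation error d̃(t) = d̂(t) - d(t). Then the estimation error satisfies the differential equation d̃'(t) = -ι d̃(t) - d'(t) for all t. -/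
/-- Disturbance-observer error dynamics: for the translational
quadrotor model `p'' = g e₃ + u + d` and observer
`z' = -ι (z + ι p' + g e₃ + u)`, with estimate `d̂ = z + ι p'` and error
`d̃ = d̂ - d`, one has `d̃' = -ι d̃ - d'`. -/
theorem stmt_0 (ι g : ℝ) (hι : 0 < ι) (hg : 0 < g)
    (p u d z : ℝ → EuclideanSpace ℝ (Fin 3))
    (hp : Differentiable ℝ p) (hp' : Differentiable ℝ (deriv p))
    (hd : Differentiable ℝ d) (hz : Differentiable ℝ z)
    (hmodel : ∀ t : ℝ, deriv (deriv p) t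
      = g • (EuclideanSpace.single 2 (1 : ℝ)) + u t + d t)
    (hobs : ∀ t : ℝ, deriv z t
      = (-ι) • (z t + ι • deriv p t + g • (EuclideanSpace.single 2 (1 : ℝ)) + u t)) :
    ∀ t : ℝ, deriv (fun s => (z s + ι • deriv p s) - d s) t
      = (-ι) • ((z t + ι • deriv p t) - d t) - deriv d t := by
  intro t
  have h1 : HasDerivAt (fun s => (z s + ι • deriv p s) - d s)
      (deriv z t + ι • deriv (deriv p) t - deriv d t) t :=
    (((hz t).hasDerivAt).add (((hp' t).hasDerivAt).const_smul ι)).sub (hd t).hasDerivAt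
  rw [h1.deriv, hobs, hmodel]
  module
end

section
/- Let k₁, k₂, k₃, k₄ ∈ ℝ and let A ∈ ℝ^{12×12} be the block matrix with 3×3 blocks [[0,0,I,0],[0,0,0,I],[-k₃I,-k₁I,-k₄I,-k₂I],[-k₃I,-2k₁I,-k₄I,-2k₂I]], where I is the 3×3 identity matrix. Then the characteristic polynomial of A equals p(s)³, where p(s) = s⁴ + (2k₂ + k₄)s³ + (2k₁ + k₃ + k₂k₄)s² + (k₁k₄ + k₂k₃)s + k₁k₃. -/
/-!
Writing a coordinate index of `A` as `3 i + k`, with `i : Fin 4` and spatial axis `k : Fin 3`,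
shows that `A` is, up to this reindexing, the block-diagonal matrix with three copies of the
`4 × 4` pattern `M = [[0,0,1,0],[0,0,0,1],[-k₃,-k₁,-k₄,-k₂],[-k₃,-2k₁,-k₄,-2k₂]]`, i.e. `A = M ⊗ I₃`.
The characteristic polynomial is invariant under reindexing and multiplicative over diagonal
blocks, so it equals `(charpoly M)³`, and `charpoly M = p` by cofactor expansion.
-/

open Polynomial

/-- The `12 × 12` system matrix `A` with `3 × 3` blocks
`[[0,0,I,0],[0,0,0,I],[-k₃I,-k₁I,-k₄I,-k₂I],[-k₃I,-2k₁I,-k₄I,-2k₂I]]`. -/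
def Amat (k₁ k₂ k₃ k₄ : ℝ) : Matrix (Fin 12) (Fin 12) ℝ :=
  Matrix.of fun i j =>
    if i.val < 6 then (if j.val = i.val + 6 then 1 else 0)
    else if i.val < 9 then
      (if j.val = i.val - 6 then -k₃ else if j.val = i.val - 3 then -k₁
       else if j.val = i.val then -k₄ else if j.val = i.val + 3 then -k₂ else 0)
    else
      (if j.val = i.val - 9 then -k₃ else if j.val = i.val - 6 then -2*k₁
       else if j.val = i.val - 3 then -k₄ else if j.val = i.val then -2*k₂ else 0)

open Matrix

section BlockDiagonal

variable {R n o : Type*} [CommRing R] [DecidableEq n] [Fintype n] [DecidableEq o] [Fintype o]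

theorem charmatrix_blockDiagonal (M : o → Matrix n n R) :
    charmatrix (blockDiagonal M) = blockDiagonal fun k => charmatrix (M k) := by
  ext ⟨i, k⟩ ⟨j, k'⟩
  by_cases hk : k = k'
  · subst hk
    by_cases hij : i = j <;> simp [hij, blockDiagonal_apply_eq]
  · simp [blockDiagonal_apply_ne _ _ _ hk, hk]

theorem charpoly_blockDiagonal (M : o → Matrix n n R) :
    (blockDiagonal M).charpoly = ∏ k, (M k).charpoly := by
  rw [charpoly, charmatrix_blockDiagonal, det_blockDiagonal]
  rfl

end BlockDiagonal

def blockPattern (k₁ k₂ k₃ k₄ : ℝ) : Matrix (Fin 4) (Fin 4) ℝ :=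
  !![0, 0, 1, 0; 0, 0, 0, 1; -k₃, -k₁, -k₄, -k₂; -k₃, -2*k₁, -k₄, -2*k₂]

theorem Amat_eq_reindex_blockDiagonal (k₁ k₂ k₃ k₄ : ℝ) :
    Amat k₁ k₂ k₃ k₄ = reindex finProdFinEquiv finProdFinEquiv
      (blockDiagonal fun _ : Fin 3 => blockPattern k₁ k₂ k₃ k₄) := by
  ext i j
  fin_cases i <;> fin_cases j <;> rfl

theorem charmatrix_blockPattern (k₁ k₂ k₃ k₄ : ℝ) :
    (blockPattern k₁ k₂ k₃ k₄).charmatrix =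
      !![X, 0, -1, 0;
         0, X, 0, -1;
         C k₃, C k₁, X + C k₄, C k₂;
         C k₃, C (2*k₁), C k₄, X + C (2*k₂)] := by
  ext i j
  fin_cases i <;> fin_cases j <;> simp [blockPattern]

theorem charpoly_blockPattern (k₁ k₂ k₃ k₄ : ℝ) :
    (blockPattern k₁ k₂ k₃ k₄).charpoly =
      X^4 + C (2*k₂ + k₄) * X^3 + C (2*k₁ + k₃ + k₂*k₄) * X^2
        + C (k₁*k₄ + k₂*k₃) * X + C (k₁*k₃) := by
  rw [charpoly, charmatrix_blockPattern, det_succ_row_zero]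
  simp only [Fin.sum_univ_four, det_fin_three, submatrix_apply, of_apply, cons_val, Fin.succAbove,
    Fin.reduceSucc, Fin.reduceCastSucc, Fin.reduceLT, ↓reduceIte, Fin.val_zero, Fin.val_two,
    map_add, map_mul, map_ofNat]
  ring

/-- The characteristic polynomial of the closed-loop system
matrix `A` equals `p(s)³` where
`p(s) = s⁴ + (2k₂+k₄)s³ + (2k₁+k₃+k₂k₄)s² + (k₁k₄+k₂k₃)s + k₁k₃`. -/
theorem stmt_3 (k₁ k₂ k₃ k₄ : ℝ) :
    (Amat k₁ k₂ k₃ k₄).charpoly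
      = (X^4 + C (2*k₂ + k₄) * X^3 + C (2*k₁ + k₃ + k₂*k₄) * X^2
          + C (k₁*k₄ + k₂*k₃) * X + C (k₁*k₃))^3 := by
  rw [Amat_eq_reindex_blockDiagonal, charpoly_reindex, charpoly_blockDiagonal, Fin.prod_const,
    charpoly_blockPattern]
end

section
/- (Proposition 1, equilibrium of the payload.) Let m₀, g > 0, let R be a 3×3 real orthogonal matrix with det R = 1, and let t₁, t₂ ∈ ℝ³ satisfy the payload equilibrium conditions t₁ + t₂ = m₀ g e₃ and e₁ × (Rᵀ(t₂ - t₁)) = 0 (cross product in ℝ³). Then there exists t₀ ∈ ℝ such that t₁ - t₂ = t₀ · (R e₁). If moreover the vertical components agree, (t₁ - t₂)·e₃ = 0 (force consensus), and the configuration is planar in the sense (R e₁)·e₂ = 0, then either t₀ = 0, or R e₁ = e₁, or R e₁ = -e₁ (the pipe is parallel to the ground); in particular a nonzero internal force t₀ ≠ 0 forces R e₁ = ± e₁. -/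
open Matrix

/-- **Proposition 1.** At a payload equilibrium
(`t₁ + t₂ = m₀ g e₃` and `e₁ × (Rᵀ(t₂ - t₁)) = 0`), there is an internal force
`t₀` with `t₁ - t₂ = t₀ R e₁`; if moreover the vertical components agree
(`(t₁ - t₂)·e₃ = 0`, force consensus) and the configuration is planar
(`(R e₁)·e₂ = 0`), then `t₀ = 0` or `R e₁ = ± e₁` (pipe parallel to ground). -/
theorem stmt_6 (m₀ g : ℝ) (hm₀ : 0 < m₀) (hg : 0 < g)
    (R : Matrix (Fin 3) (Fin 3) ℝ) (hR : Rᵀ * R = 1) (hdet : R.det = 1)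
    (t₁ t₂ : Fin 3 → ℝ)
    (hbal : t₁ + t₂ = (m₀ * g) • ![(0:ℝ), 0, 1])
    (heq : crossProduct ![(1:ℝ), 0, 0] (Rᵀ.mulVec (t₂ - t₁)) = 0) :
    ∃ t₀ : ℝ, t₁ - t₂ = t₀ • R.mulVec ![(1:ℝ), 0, 0] ∧
      (((t₁ - t₂) ⬝ᵥ ![(0:ℝ), 0, 1] = 0 ∧ (R.mulVec ![(1:ℝ), 0, 0]) ⬝ᵥ ![(0:ℝ), 1, 0] = 0) →
        (t₀ = 0 ∨ R.mulVec ![(1:ℝ), 0, 0] = ![(1:ℝ), 0, 0]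
          ∨ R.mulVec ![(1:ℝ), 0, 0] = -![(1:ℝ), 0, 0])) := by
  set v := Rᵀ.mulVec (t₂ - t₁) with hvdef
  have hv1 : v 1 = 0 := by
    have := congrFun heq 2
    simpa [crossProduct] using this
  have hv2 : v 2 = 0 := by
    have := congrFun heq 1
    have : -v 2 = 0 := by simpa [crossProduct] using this
    linarith
  have hveq : v = (v 0) • ![(1:ℝ), 0, 0] := by
    funext i
    fin_cases i <;> simp [hv1, hv2]
  have hRRt : R * Rᵀ = 1 := mul_eq_one_comm.mp hR
  have ht : t₂ - t₁ = (v 0) • R.mulVec ![(1:ℝ), 0, 0] := by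
    have h1 : R.mulVec v = t₂ - t₁ := by
      rw [hvdef, mulVec_mulVec, hRRt, one_mulVec]
    rw [← h1]
    nth_rewrite 1 [hveq]
    rw [mulVec_smul]
  refine ⟨-(v 0), ?_, ?_⟩
  · have : t₁ - t₂ = -(t₂ - t₁) := by ring_nf
    rw [this, ht]; module
  · rintro ⟨h3, h2⟩
    by_cases hv0 : v 0 = 0
    · left; simp [hv0]
    right
    set u := R.mulVec ![(1:ℝ), 0, 0] with hu
    have hu1 : u 1 = 0 := by
      simpa [dotProduct, Fin.sum_univ_three] using h2
    have hu2 : u 2 = 0 := by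
      have h3' : (t₁ - t₂) 2 = 0 := by
        simpa [dotProduct, Fin.sum_univ_three] using h3
      have : t₁ - t₂ = -(v 0) • u := by
        have : t₁ - t₂ = -(t₂ - t₁) := by ring_nf
        rw [this, ht]; module
      rw [this] at h3'
      simp at h3'
      rcases h3' with h | h
      · exact absurd h hv0
      · exact h
    have hui : ∀ i, u i = R i 0 := by
      intro i
      simp [hu, mulVec, dotProduct, Fin.sum_univ_three]
    have hnorm : u 0 * u 0 + u 1 * u 1 + u 2 * u 2 = 1 := by
      have := congrFun (congrFun hR 0) 0
      simp [mul_apply, transpose_apply, Fin.sum_univ_three, Matrix.one_apply] at this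
      simp only [hui]
      linarith [this]
    have h0 : u 0 * u 0 = 1 := by rw [hu1, hu2] at hnorm; linarith
    have : u 0 = 1 ∨ u 0 = -1 := by
      rcases mul_self_eq_one_iff.mp h0 with h | h
      · left; exact h
      · right; exact h
    rcases this with h | h
    · left; funext i; fin_cases i <;> simp [h, hu1, hu2]
    · right; funext i; fin_cases i <;> simp [h, hu1, hu2]
end

section
/- (Separation of thrust uncertainties under the quasi-static condition.) Let m₀, m₁, m₂, g > 0; let θ₁, θ₂, φ₁, φ₂ ∈ ℝ with cos θ₁ ≠ 0, cos θ₂ ≠ 0, cos φ₁ ≠ 0, cos φ₂ ≠ 0, and tan θ₁ ≠ tan θ₂. Let Δf₁, Δf₂, t₁ₓ, t₂ₓ, t₁z, t₂z and d̂ᵢₓ, d̂ᵢz, d̃ᵢₓ, d̃ᵢz (i = 1, 2) be real numbers satisfying the quasi-static force balance t₁ₓ + t₂ₓ = 0 and t₁z + t₂z = m₀ g, and the estimation relations mᵢ d̂ᵢₓ = -Δfᵢ sin θᵢ cos φᵢ + tᵢₓ + mᵢ d̃ᵢₓ and mᵢ d̂ᵢz = -Δfᵢ cos θᵢ cos φᵢ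 + tᵢz + mᵢ d̃ᵢz for i = 1, 2. Define Δ̂ₓ = m₁d̂₁ₓ + m₂d̂₂ₓ, Δ̂z = m₁d̂₁z + m₂d̂₂z - m₀g, Δ̃ₓ = m₁d̃₁ₓ + m₂d̃₂ₓ, Δ̃z = m₁d̃₁z + m₂d̃₂z. Then Δf₁ = (Δ̂ₓ - Δ̂z tan θ₂ - Δ̃ₓ + Δ̃z tan θ₂) / ((cos θ₁ tan θ₂ - sin θ₁) cos φ₁) and Δf₂ = (Δ̂ₓ - Δ̂z tan θ₁ - Δ̃ₓ + Δ̃z tan θ₁) / ((cos θ₂ tan θ₁ - sin θ₂) cos φ₂). -/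
/-- Separation of thrust uncertainties under the quasi-static
condition: from the force balance and the lumped-disturbance estimation
relations, the thrust uncertainties `Δf₁`, `Δf₂` are recovered by the stated
closed-form expressions. -/
theorem stmt_8 (m₀ m₁ m₂ g : ℝ) (hm₀ : 0 < m₀) (hm₁ : 0 < m₁) (hm₂ : 0 < m₂) (hg : 0 < g)
    (θ₁ θ₂ φ₁ φ₂ : ℝ)
    (hθ₁ : Real.cos θ₁ ≠ 0) (hθ₂ : Real.cos θ₂ ≠ 0)
    (hφ₁ : Real.cos φ₁ ≠ 0) (hφ₂ : Real.cos φ₂ ≠ 0)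
    (htan : Real.tan θ₁ ≠ Real.tan θ₂)
    (Δf₁ Δf₂ t1x t2x t1z t2z dhat1x dhat1z dhat2x dhat2z dtil1x dtil1z dtil2x dtil2z : ℝ)
    (hbalx : t1x + t2x = 0) (hbalz : t1z + t2z = m₀ * g)
    (hest1x : m₁ * dhat1x = -Δf₁ * Real.sin θ₁ * Real.cos φ₁ + t1x + m₁ * dtil1x)
    (hest1z : m₁ * dhat1z = -Δf₁ * Real.cos θ₁ * Real.cos φ₁ + t1z + m₁ * dtil1z)
    (hest2x : m₂ * dhat2x = -Δf₂ * Real.sin θ₂ * Real.cos φ₂ + t2x + m₂ * dtil2x)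
    (hest2z : m₂ * dhat2z = -Δf₂ * Real.cos θ₂ * Real.cos φ₂ + t2z + m₂ * dtil2z)
    (Δhatx Δhatz Δtilx Δtilz : ℝ)
    (hΔhatx : Δhatx = m₁ * dhat1x + m₂ * dhat2x)
    (hΔhatz : Δhatz = m₁ * dhat1z + m₂ * dhat2z - m₀ * g)
    (hΔtilx : Δtilx = m₁ * dtil1x + m₂ * dtil2x)
    (hΔtilz : Δtilz = m₁ * dtil1z + m₂ * dtil2z) :
    Δf₁ = (Δhatx - Δhatz * Real.tan θ₂ - Δtilx + Δtilz * Real.tan θ₂)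
        / ((Real.cos θ₁ * Real.tan θ₂ - Real.sin θ₁) * Real.cos φ₁) ∧
    Δf₂ = (Δhatx - Δhatz * Real.tan θ₁ - Δtilx + Δtilz * Real.tan θ₁)
        / ((Real.cos θ₂ * Real.tan θ₁ - Real.sin θ₂) * Real.cos φ₂) := by
  have hcross : Real.sin θ₁ * Real.cos θ₂ - Real.sin θ₂ * Real.cos θ₁ ≠ 0 := by
    intro h
    apply htan
    rw [Real.tan_eq_sin_div_cos, Real.tan_eq_sin_div_cos]
    field_simp
    linarith
  have hx : Δhatx - Δtilx = -Δf₁ * Real.sin θ₁ * Real.cos φ₁ - Δf₂ * Real.sin θ₂ * Real.cos φ₂ := by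
    subst hΔhatx hΔtilx; linear_combination hest1x + hest2x + hbalx
  have hz : Δhatz - Δtilz = -Δf₁ * Real.cos θ₁ * Real.cos φ₁ - Δf₂ * Real.cos θ₂ * Real.cos φ₂ := by
    subst hΔhatz hΔtilz; linear_combination hest1z + hest2z + hbalz
  rw [Real.tan_eq_sin_div_cos, Real.tan_eq_sin_div_cos]
  constructor
  · rw [eq_div_iff (by
      intro h
      apply hcross
      have := mul_eq_zero.mp h
      rcases this with h1 | h1
      · field_simp at h1; linarith
      · exact absurd h1 hφ₁)]
    field_simp
    linear_combination Real.sin θ₂ * hz - Real.cos θ₂ * hx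
  · rw [eq_div_iff (by
      intro h
      apply hcross
      have := mul_eq_zero.mp h
      rcases this with h1 | h1
      · field_simp at h1; linarith
      · exact absurd h1 hφ₂)]
    field_simp
    linear_combination Real.sin θ₁ * hz - Real.cos θ₁ * hx
end

section
/- Under the same quasi-static setup (force balance t₁ₓ + t₂ₓ = 0, t₁z + t₂z = m₀ g; estimation relations mᵢ d̂ᵢₓ = -Δfᵢ sin θᵢ cos φᵢ + tᵢₓ + mᵢ d̃ᵢₓ, mᵢ d̂ᵢz = -Δfᵢ cos θᵢ cos φᵢ + tᵢz + mᵢ d̃ᵢz for i = 1,2; cos θᵢ ≠ 0, cos φᵢ ≠ 0, tan θ₁ ≠ tan θ₂; Δ̂ₓ = m₁d̂₁ₓ + m₂d̂₂ₓ, Δ̂z = m₁d̂₁z + m₂d̂₂z - m₀g, Δ̃ₓ = m₁d̃₁ₓ + m₂d̃₂ₓ, Δ̃z = m₁d̃₁z + m₂d̃₂z), the vertical component of the thrust-uncertainty difference Ξ_z := Δf₂ cos θ₂ cos φ₂ - Δf₁ cos θ₁ cos φ₁ satisfies Ξ_z = [(Δ̂z - Δ̃z)(tan θ₁ + tan θ₂)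 - 2(Δ̂ₓ - Δ̃ₓ)] / (tan θ₂ - tan θ₁). -/
/-- Under the quasi-static setup, the vertical component of the
thrust-uncertainty difference `Ξ_z = Δf₂ cos θ₂ cos φ₂ - Δf₁ cos θ₁ cos φ₁`
satisfies
`Ξ_z = [(Δ̂z - Δ̃z)(tan θ₁ + tan θ₂) - 2(Δ̂ₓ - Δ̃ₓ)] / (tan θ₂ - tan θ₁)`. -/
theorem stmt_9 (m₀ m₁ m₂ g : ℝ) (hm₀ : 0 < m₀) (hm₁ : 0 < m₁) (hm₂ : 0 < m₂) (hg : 0 < g)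
    (θ₁ θ₂ φ₁ φ₂ : ℝ)
    (hθ₁ : Real.cos θ₁ ≠ 0) (hθ₂ : Real.cos θ₂ ≠ 0)
    (hφ₁ : Real.cos φ₁ ≠ 0) (hφ₂ : Real.cos φ₂ ≠ 0)
    (htan : Real.tan θ₁ ≠ Real.tan θ₂)
    (Δf₁ Δf₂ t1x t2x t1z t2z dhat1x dhat1z dhat2x dhat2z dtil1x dtil1z dtil2x dtil2z : ℝ)
    (hbalx : t1x + t2x = 0) (hbalz : t1z + t2z = m₀ * g)
    (hest1x : m₁ * dhat1x = -Δf₁ * Real.sin θ₁ * Real.cos φ₁ + t1x + m₁ * dtil1x)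
    (hest1z : m₁ * dhat1z = -Δf₁ * Real.cos θ₁ * Real.cos φ₁ + t1z + m₁ * dtil1z)
    (hest2x : m₂ * dhat2x = -Δf₂ * Real.sin θ₂ * Real.cos φ₂ + t2x + m₂ * dtil2x)
    (hest2z : m₂ * dhat2z = -Δf₂ * Real.cos θ₂ * Real.cos φ₂ + t2z + m₂ * dtil2z)
    (Δhatx Δhatz Δtilx Δtilz Ξz : ℝ)
    (hΔhatx : Δhatx = m₁ * dhat1x + m₂ * dhat2x)
    (hΔhatz : Δhatz = m₁ * dhat1z + m₂ * dhat2z - m₀ * g)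
    (hΔtilx : Δtilx = m₁ * dtil1x + m₂ * dtil2x)
    (hΔtilz : Δtilz = m₁ * dtil1z + m₂ * dtil2z)
    (hΞz : Ξz = Δf₂ * Real.cos θ₂ * Real.cos φ₂ - Δf₁ * Real.cos θ₁ * Real.cos φ₁) :
    Ξz = ((Δhatz - Δtilz) * (Real.tan θ₁ + Real.tan θ₂) - 2 * (Δhatx - Δtilx))
        / (Real.tan θ₂ - Real.tan θ₁) := by
  have hne : Real.tan θ₂ - Real.tan θ₁ ≠ 0 := sub_ne_zero.mpr (Ne.symm htan)
  have hs1 : Real.sin θ₁ = Real.tan θ₁ * Real.cos θ₁ := by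
    rw [Real.tan_eq_sin_div_cos]; field_simp
  have hs2 : Real.sin θ₂ = Real.tan θ₂ * Real.cos θ₂ := by
    rw [Real.tan_eq_sin_div_cos]; field_simp
  have hZ : Δhatz - Δtilz
      = -(Δf₁ * Real.cos θ₁ * Real.cos φ₁ + Δf₂ * Real.cos θ₂ * Real.cos φ₂) := by
    rw [hΔhatz, hΔtilz]; linarith [hest1z, hest2z, hbalz]
  have hX : Δhatx - Δtilx
      = -(Δf₁ * Real.cos θ₁ * Real.cos φ₁ * Real.tan θ₁
          + Δf₂ * Real.cos θ₂ * Real.cos φ₂ * Real.tan θ₂) := by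
    rw [hΔhatx, hΔtilx]
    linear_combination hest1x + hest2x + hbalx - Δf₁ * Real.cos φ₁ * hs1
      - Δf₂ * Real.cos φ₂ * hs2
  rw [hΞz, eq_div_iff hne]
  linear_combination -(Real.tan θ₁ + Real.tan θ₂) * hZ + 2 * hX
end

section
/- Under the quasi-static setup with cos θᵢ ≠ 0, cos φᵢ ≠ 0, tan θ₁ ≠ tan θ₂, suppose additionally t₂z - t₁z = t₀ sin θ₀ (vertical cable-force difference in the planar quasi-static configuration). Define the estimated separated thrust uncertainties Δf̂₁ = (Δ̂ₓ - Δ̂z tan θ₂)/((cos θ₁ tan θ₂ - sin θ₁) cos φ₁) and Δf̂₂ = (Δ̂ₓ - Δ̂z tan θ₁)/((cos θ₂ tan θ₁ - sin θ₂) cos φ₂), and the vertical cable force estimates t̂ᵢz = mᵢ d̂ᵢz + Δf̂ᵢ cos θᵢ cos φᵢ. Then the estimated force-consensus error decomposes as t̂₂z - t̂₁z = t₀ sin θ₀ + C·(d̃₁ₓ, d̃₁y, d̃₁z, d̃₂ₓ, d̃₂y, d̃₂z), where C is the row vector (−2m₁/(tan θ₂ − tan θ₁), 0, 2m₁ tan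 θ₁/(tan θ₂ − tan θ₁), −2m₂/(tan θ₂ − tan θ₁), 0, 2m₂ tan θ₂/(tan θ₂ − tan θ₁)). -/
/-!
With `sin θᵢ = tan θᵢ cos θᵢ`, the force balance turns the combined estimates into
`Δ̂ₓ = -a₁ tan θ₁ - a₂ tan θ₂ + Eₓ` and `Δ̂z = -a₁ - a₂ + E_z`, where `aᵢ = Δfᵢ cos θᵢ cos φᵢ`
is the vertical component of the `i`-th thrust uncertainty and `E = m₁ d̃₁ + m₂ d̃₂`. Eliminating `a₂`
(resp. `a₁`) from this 2×2 system shows that `Δf̂ᵢ cos θᵢ cos φᵢ` recovers `aᵢ` up to a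
multiple of `E`; substituting into `t̂ᵢz` leaves `tᵢz` plus a linear combination of the
estimation errors, and `t₂z - t₁z = t₀ sin θ₀` closes the computation.
-/

open Real

lemma cos_mul_tan_sub_sin {θ : ℝ} (θ' : ℝ) (hθ : cos θ ≠ 0) :
    cos θ * tan θ' - sin θ = cos θ * (tan θ' - tan θ) := by
  rw [← tan_mul_cos hθ]
  ring

lemma div_cos_mul_tan_sub_sin_mul_cos {θ φ : ℝ} (θ' u : ℝ) (hθ : cos θ ≠ 0) (hφ : cos φ ≠ 0) :
    u / ((cos θ * tan θ' - sin θ) * cos φ) * cos θ * cos φ = u / (tan θ' - tan θ) := by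
  rw [cos_mul_tan_sub_sin θ' hθ, mul_assoc, div_mul_eq_mul_div,
    show cos θ * (tan θ' - tan θ) * cos φ = (cos θ * cos φ) * (tan θ' - tan θ) by ring,
    mul_comm u, mul_div_mul_left _ _ (mul_ne_zero hθ hφ)]

lemma sub_mul_div_sub_eq_add_div {X Z a b T T' E F : ℝ} (hT : T ≠ T')
    (hX : X = -a * T - b * T' + E) (hZ : Z = -a - b + F) :
    (X - Z * T') / (T' - T) = a + (E - F * T') / (T' - T) := by
  have : T' - T ≠ 0 := sub_ne_zero.mpr hT.symm
  rw [hX, hZ]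
  field_simp
  ring

theorem stmt_10_general (m₀ m₁ m₂ g : ℝ)
    (θ₁ θ₂ φ₁ φ₂ t₀ θ₀ : ℝ)
    (hθ₁ : Real.cos θ₁ ≠ 0) (hθ₂ : Real.cos θ₂ ≠ 0)
    (hφ₁ : Real.cos φ₁ ≠ 0) (hφ₂ : Real.cos φ₂ ≠ 0)
    (htan : Real.tan θ₁ ≠ Real.tan θ₂)
    (Δf₁ Δf₂ t1x t2x t1z t2z dhat1x dhat1z dhat2x dhat2z : ℝ)
    (dtil1x dtil1y dtil1z dtil2x dtil2y dtil2z : ℝ)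
    (hbalx : t1x + t2x = 0) (hbalz : t1z + t2z = m₀ * g)
    (hest1x : m₁ * dhat1x = -Δf₁ * Real.sin θ₁ * Real.cos φ₁ + t1x + m₁ * dtil1x)
    (hest1z : m₁ * dhat1z = -Δf₁ * Real.cos θ₁ * Real.cos φ₁ + t1z + m₁ * dtil1z)
    (hest2x : m₂ * dhat2x = -Δf₂ * Real.sin θ₂ * Real.cos φ₂ + t2x + m₂ * dtil2x)
    (hest2z : m₂ * dhat2z = -Δf₂ * Real.cos θ₂ * Real.cos φ₂ + t2z + m₂ * dtil2z)
    (hforce : t2z - t1z = t₀ * Real.sin θ₀)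
    (Δhatx Δhatz : ℝ)
    (hΔhatx : Δhatx = m₁ * dhat1x + m₂ * dhat2x)
    (hΔhatz : Δhatz = m₁ * dhat1z + m₂ * dhat2z - m₀ * g)
    (Δfhat₁ Δfhat₂ that1z that2z : ℝ)
    (hΔfhat₁ : Δfhat₁ = (Δhatx - Δhatz * Real.tan θ₂)
        / ((Real.cos θ₁ * Real.tan θ₂ - Real.sin θ₁) * Real.cos φ₁))
    (hΔfhat₂ : Δfhat₂ = (Δhatx - Δhatz * Real.tan θ₁)
        / ((Real.cos θ₂ * Real.tan θ₁ - Real.sin θ₂) * Real.cos φ₂))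
    (hthat1z : that1z = m₁ * dhat1z + Δfhat₁ * Real.cos θ₁ * Real.cos φ₁)
    (hthat2z : that2z = m₂ * dhat2z + Δfhat₂ * Real.cos θ₂ * Real.cos φ₂) :
    that2z - that1z = t₀ * Real.sin θ₀
      + dotProduct
          ![-2*m₁ / (Real.tan θ₂ - Real.tan θ₁), 0,
            2*m₁*Real.tan θ₁ / (Real.tan θ₂ - Real.tan θ₁),
            -2*m₂ / (Real.tan θ₂ - Real.tan θ₁), 0,
            2*m₂*Real.tan θ₂ / (Real.tan θ₂ - Real.tan θ₁)]
          ![dtil1x, dtil1y, dtil1z, dtil2x, dtil2y, dtil2z] := by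
  set a₁ := Δf₁ * cos θ₁ * cos φ₁
  set a₂ := Δf₂ * cos θ₂ * cos φ₂
  set Ex := m₁ * dtil1x + m₂ * dtil2x
  set Ez := m₁ * dtil1z + m₂ * dtil2z
  have hΔx : Δhatx = -a₁ * tan θ₁ - a₂ * tan θ₂ + Ex := by
    rw [← tan_mul_cos hθ₁] at hest1x
    rw [← tan_mul_cos hθ₂] at hest2x
    linear_combination hΔhatx + hest1x + hest2x + hbalx
  have hΔz : Δhatz = -a₁ - a₂ + Ez := by
    linear_combination hΔhatz + hest1z + hest2z + hbalz
  have hsep₁ : Δfhat₁ * cos θ₁ * cos φ₁ = a₁ + (Ex - Ez * tan θ₂) / (tan θ₂ - tan θ₁) := by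
    rw [hΔfhat₁, div_cos_mul_tan_sub_sin_mul_cos _ _ hθ₁ hφ₁]
    exact sub_mul_div_sub_eq_add_div htan hΔx hΔz
  have hsep₂ : Δfhat₂ * cos θ₂ * cos φ₂ = a₂ + (Ex - Ez * tan θ₁) / (tan θ₁ - tan θ₂) := by
    rw [hΔfhat₂, div_cos_mul_tan_sub_sin_mul_cos _ _ hθ₂ hφ₂]
    exact sub_mul_div_sub_eq_add_div (a := a₂) (b := a₁) htan.symm
      (by linear_combination hΔx) (by linear_combination hΔz)
  have hdiff : tan θ₂ - tan θ₁ ≠ 0 := sub_ne_zero.mpr htan.symm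
  have hdiff' : tan θ₁ - tan θ₂ ≠ 0 := sub_ne_zero.mpr htan
  rw [hthat1z, hthat2z, hsep₁, hsep₂, hest1z, hest2z, ← hforce]
  simp only [Matrix.cons_dotProduct, Matrix.dotProduct_of_isEmpty, Matrix.head_cons,
    Matrix.tail_cons]
  field_simp
  ring

/-- Decomposition of the estimated vertical force-consensus
error: with the separated thrust-uncertainty estimates `Δf̂ᵢ` and the vertical
cable force estimates `t̂ᵢz = mᵢ d̂ᵢz + Δf̂ᵢ cos θᵢ cos φᵢ`, one has
`t̂₂z - t̂₁z = t₀ sin θ₀ + C ⬝ (d̃₁ₓ, d̃₁y, d̃₁z, d̃₂ₓ, d̃₂y, d̃₂z)`. -/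
theorem stmt_10 (m₀ m₁ m₂ g : ℝ) (hm₀ : 0 < m₀) (hm₁ : 0 < m₁) (hm₂ : 0 < m₂) (hg : 0 < g)
    (θ₁ θ₂ φ₁ φ₂ t₀ θ₀ : ℝ)
    (hθ₁ : Real.cos θ₁ ≠ 0) (hθ₂ : Real.cos θ₂ ≠ 0)
    (hφ₁ : Real.cos φ₁ ≠ 0) (hφ₂ : Real.cos φ₂ ≠ 0)
    (htan : Real.tan θ₁ ≠ Real.tan θ₂)
    (Δf₁ Δf₂ t1x t2x t1z t2z dhat1x dhat1z dhat2x dhat2z : ℝ)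
    (dtil1x dtil1y dtil1z dtil2x dtil2y dtil2z : ℝ)
    (hbalx : t1x + t2x = 0) (hbalz : t1z + t2z = m₀ * g)
    (hest1x : m₁ * dhat1x = -Δf₁ * Real.sin θ₁ * Real.cos φ₁ + t1x + m₁ * dtil1x)
    (hest1z : m₁ * dhat1z = -Δf₁ * Real.cos θ₁ * Real.cos φ₁ + t1z + m₁ * dtil1z)
    (hest2x : m₂ * dhat2x = -Δf₂ * Real.sin θ₂ * Real.cos φ₂ + t2x + m₂ * dtil2x)
    (hest2z : m₂ * dhat2z = -Δf₂ * Real.cos θ₂ * Real.cos φ₂ + t2z + m₂ * dtil2z)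
    (hforce : t2z - t1z = t₀ * Real.sin θ₀)
    (Δhatx Δhatz : ℝ)
    (hΔhatx : Δhatx = m₁ * dhat1x + m₂ * dhat2x)
    (hΔhatz : Δhatz = m₁ * dhat1z + m₂ * dhat2z - m₀ * g)
    (Δfhat₁ Δfhat₂ that1z that2z : ℝ)
    (hΔfhat₁ : Δfhat₁ = (Δhatx - Δhatz * Real.tan θ₂)
        / ((Real.cos θ₁ * Real.tan θ₂ - Real.sin θ₁) * Real.cos φ₁))
    (hΔfhat₂ : Δfhat₂ = (Δhatx - Δhatz * Real.tan θ₁)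
        / ((Real.cos θ₂ * Real.tan θ₁ - Real.sin θ₂) * Real.cos φ₂))
    (hthat1z : that1z = m₁ * dhat1z + Δfhat₁ * Real.cos θ₁ * Real.cos φ₁)
    (hthat2z : that2z = m₂ * dhat2z + Δfhat₂ * Real.cos θ₂ * Real.cos φ₂) :
    that2z - that1z = t₀ * Real.sin θ₀
      + dotProduct
          ![-2*m₁ / (Real.tan θ₂ - Real.tan θ₁), 0,
            2*m₁*Real.tan θ₁ / (Real.tan θ₂ - Real.tan θ₁),
            -2*m₂ / (Real.tan θ₂ - Real.tan θ₁), 0,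
            2*m₂*Real.tan θ₂ / (Real.tan θ₂ - Real.tan θ₁)]
          ![dtil1x, dtil1y, dtil1z, dtil2x, dtil2y, dtil2z] :=
  stmt_10_general m₀ m₁ m₂ g θ₁ θ₂ φ₁ φ₂ t₀ θ₀ hθ₁ hθ₂ hφ₁ hφ₂ htan Δf₁ Δf₂ t1x t2x t1z t2z dhat1x
    dhat1z dhat2x dhat2z dtil1x dtil1y dtil1z dtil2x dtil2y dtil2z hbalx hbalz hest1x hest1z hest2x
    hest2z hforce Δhatx Δhatz hΔhatx hΔhatz Δfhat₁ Δfhat₂ that1z that2z hΔfhat₁ hΔfhat₂ hthat1z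
    hthat2z
end

section
/- Let l₀, l₁, l₂ > 0, s > 0, θ ∈ (-π/2, π/2) with s/cos θ - 2l₀ > 0, and k ∈ ℝ. If the suspension constraint l₁/√((k - sin θ)² + cos²θ) + l₂/√((k + sin θ)² + cos²θ) = s/cos θ - 2l₀ holds, then k² ≥ 4 l₁ l₂ / (s/cos θ - 2l₀)² - 1. -/
open Real

/-- Lower bound on `k²` from the suspension constraint:
if `l₁/√((k-sinθ)²+cos²θ) + l₂/√((k+sinθ)²+cos²θ) = s/cosθ - 2l₀ > 0`, then
`k² ≥ 4l₁l₂/(s/cosθ - 2l₀)² - 1`. -/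
theorem stmt_11 (l₀ l₁ l₂ s θ k : ℝ)
    (hl₀ : 0 < l₀) (hl₁ : 0 < l₁) (hl₂ : 0 < l₂) (hs : 0 < s)
    (hθ : θ ∈ Set.Ioo (-(π/2)) (π/2))
    (hpos : 0 < s / Real.cos θ - 2 * l₀)
    (hcon : l₁ / Real.sqrt ((k - Real.sin θ)^2 + Real.cos θ^2)
          + l₂ / Real.sqrt ((k + Real.sin θ)^2 + Real.cos θ^2)
          = s / Real.cos θ - 2 * l₀) :
    k^2 ≥ 4 * l₁ * l₂ / (s / Real.cos θ - 2 * l₀)^2 - 1 := by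
  set D := s / Real.cos θ - 2 * l₀ with hD
  set a := Real.sqrt ((k - Real.sin θ)^2 + Real.cos θ^2) with haDef
  set b := Real.sqrt ((k + Real.sin θ)^2 + Real.cos θ^2) with hbDef
  have hcosθ : 0 < Real.cos θ := Real.cos_pos_of_mem_Ioo hθ
  have ha0 : 0 < a := Real.sqrt_pos.mpr (by positivity)
  have hb0 : 0 < b := Real.sqrt_pos.mpr (by positivity)
  have hsc : Real.sin θ ^ 2 + Real.cos θ ^ 2 = 1 := Real.sin_sq_add_cos_sq θ
  have ha2 : a ^ 2 = k ^ 2 + 1 - 2 * k * Real.sin θ := by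
    rw [haDef, Real.sq_sqrt (by positivity)]; nlinarith
  have hb2 : b ^ 2 = k ^ 2 + 1 + 2 * k * Real.sin θ := by
    rw [hbDef, Real.sq_sqrt (by positivity)]; nlinarith
  have hab : a * b ≤ k ^ 2 + 1 := by
    nlinarith [sq_nonneg (a * b), sq_nonneg (2 * k * Real.sin θ), mul_pos ha0 hb0,
      sq_nonneg (a * b - (k ^ 2 + 1))]
  -- AM-GM: 4 * (l₁/a) * (l₂/b) ≤ D^2
  have hamgm : 4 * (l₁ / a) * (l₂ / b) ≤ D ^ 2 := by
    have hcon2 : (l₁ / a + l₂ / b) ^ 2 = D ^ 2 := by rw [hcon]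
    nlinarith [sq_nonneg (l₁ / a - l₂ / b)]
  have key : 4 * l₁ * l₂ ≤ D ^ 2 * (k ^ 2 + 1) := by
    have h1 : 4 * (l₁ / a) * (l₂ / b) = 4 * l₁ * l₂ / (a * b) := by
      field_simp
    rw [h1] at hamgm
    have h2 : 4 * l₁ * l₂ ≤ D ^ 2 * (a * b) := by
      have := (div_le_iff₀ (mul_pos ha0 hb0)).mp hamgm
      linarith [this]
    have : D ^ 2 * (a * b) ≤ D ^ 2 * (k ^ 2 + 1) := by
      apply mul_le_mul_of_nonneg_left hab (by positivity)
    linarith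
  rw [ge_iff_le, sub_le_iff_le_add, div_le_iff₀ (by positivity)]
  linarith
end

section
/- Let l₀, l₁, l₂, s > 0 and let I ⊆ (-π/2, π/2) be an open interval. Let k : I → ℝ be differentiable with k(θ) > 0 for all θ ∈ I, and suppose the suspension constraint l₁ cos θ / g₁ + l₂ cos θ / g₂ + 2 l₀ cos θ = s holds for all θ ∈ I, where g₁ = √(k(θ)² - 2k(θ) sin θ + 1) and g₂ = √(k(θ)² + 2k(θ) sin θ + 1). Then at every θ ∈ I where l₁(k - sin θ)/g₁³ + l₂(k + sin θ)/g₂³ ≠ 0, the derivative of k satisfies k'(θ) = -[ (l₁/g₁³)(k - sin θ)(k sin θ - 1) + (l₂/g₂³)(k + sin θ)(k sin θ + 1) + 2 l₀ sin θ ] / ( [ l₁(k - sin θ)/g₁³ + l₂(k + sin θ)/g₂³ ] cos θ ). -/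
/-!
Differentiate the constraint along `θ ↦ (k θ, θ)`: its left side is constant near `θ`, so its
derivative vanishes. With `g² = k² ∓ 2k sin θ + 1` and `cos² θ = 1 - sin² θ`, the derivative of
`cos θ / g` factors as `±(k ∓ sin θ)(1 ∓ k sin θ ∓ k' cos θ) / g³`, which is linear in `k'`;
solving for `k'` gives the formula.
-/

open Real

lemma sq_sub_two_mul_mul_sin_add_one_pos {θ : ℝ} (hθ : cos θ ≠ 0) (c : ℝ) :
    0 < c ^ 2 - 2 * c * sin θ + 1 := by
  have hcos : 0 < cos θ ^ 2 := by positivity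
  nlinarith [sq_nonneg (c - sin θ), sin_sq_add_cos_sq θ]

lemma hasDerivAt_cos_div_sqrt_sub {k : ℝ → ℝ} {D θ : ℝ} (hk : HasDerivAt k D θ)
    (hθ : cos θ ≠ 0) :
    HasDerivAt (fun x ↦ cos x / √(k x ^ 2 - 2 * k x * sin x + 1))
      ((k θ - sin θ) * (1 - k θ * sin θ - cos θ * D) / √(k θ ^ 2 - 2 * k θ * sin θ + 1) ^ 3)
      θ := by
  have hu := sq_sub_two_mul_mul_sin_add_one_pos hθ (k θ)
  have hg : 0 < √(k θ ^ 2 - 2 * k θ * sin θ + 1) := sqrt_pos.mpr hu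
  have hsq : √(k θ ^ 2 - 2 * k θ * sin θ + 1) ^ 2 = k θ ^ 2 - 2 * k θ * sin θ + 1 :=
    sq_sqrt hu.le
  have hradicand : HasDerivAt (fun x ↦ k x ^ 2 - 2 * k x * sin x + 1)
      (2 * ((k θ - sin θ) * D - k θ * cos θ)) θ := by
    refine (((hk.pow 2).sub ((hk.const_mul 2).mul (hasDerivAt_sin θ))).add_const 1).congr_deriv ?_
    push_cast
    ring
  refine ((hasDerivAt_cos θ).div (hradicand.sqrt hu.ne') hg.ne').congr_deriv ?_
  set g := √(k θ ^ 2 - 2 * k θ * sin θ + 1)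
  field_simp
  linear_combination -(sin θ) * hsq + k θ * sin_sq_add_cos_sq θ

lemma hasDerivAt_cos_div_sqrt_add {k : ℝ → ℝ} {D θ : ℝ} (hk : HasDerivAt k D θ)
    (hθ : cos θ ≠ 0) :
    HasDerivAt (fun x ↦ cos x / √(k x ^ 2 + 2 * k x * sin x + 1))
      (-((k θ + sin θ) * (1 + k θ * sin θ + cos θ * D)) / √(k θ ^ 2 + 2 * k θ * sin θ + 1) ^ 3)
      θ := by
  have hneg : ∀ c x : ℝ, (-c) ^ 2 - 2 * -c * sin x + 1 = c ^ 2 + 2 * c * sin x + 1 :=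
    fun _ _ ↦ by ring
  convert hasDerivAt_cos_div_sqrt_sub hk.neg hθ using 1
  · simp only [Pi.neg_apply, hneg]
  · simp only [Pi.neg_apply, hneg]
    ring

theorem stmt_12_general (l₀ l₁ l₂ s : ℝ)
    (a b : ℝ) (hI : Set.Ioo a b ⊆ Set.Ioo (-(π/2)) (π/2))
    (k : ℝ → ℝ)
    (hkdiff : ∀ θ ∈ Set.Ioo a b, DifferentiableAt ℝ k θ)
    (g₁ g₂ : ℝ → ℝ)
    (hg₁ : ∀ θ : ℝ, g₁ θ = Real.sqrt ((k θ)^2 - 2 * k θ * Real.sin θ + 1))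
    (hg₂ : ∀ θ : ℝ, g₂ θ = Real.sqrt ((k θ)^2 + 2 * k θ * Real.sin θ + 1))
    (hcon : ∀ θ ∈ Set.Ioo a b,
      l₁ * Real.cos θ / g₁ θ + l₂ * Real.cos θ / g₂ θ + 2 * l₀ * Real.cos θ = s) :
    ∀ θ ∈ Set.Ioo a b,
      l₁ * (k θ - Real.sin θ) / (g₁ θ)^3 + l₂ * (k θ + Real.sin θ) / (g₂ θ)^3 ≠ 0 →
      deriv k θ
        = -((l₁ / (g₁ θ)^3) * (k θ - Real.sin θ) * (k θ * Real.sin θ - 1)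
            + (l₂ / (g₂ θ)^3) * (k θ + Real.sin θ) * (k θ * Real.sin θ + 1)
            + 2 * l₀ * Real.sin θ)
          / ((l₁ * (k θ - Real.sin θ) / (g₁ θ)^3
              + l₂ * (k θ + Real.sin θ) / (g₂ θ)^3) * Real.cos θ) := by
  intro θ hθ hne
  have hcos : cos θ ≠ 0 := (cos_pos_of_mem_Ioo (hI hθ)).ne'
  have hk := (hkdiff θ hθ).hasDerivAt
  have hF := (((hasDerivAt_cos_div_sqrt_sub hk hcos).const_mul l₁).add
    ((hasDerivAt_cos_div_sqrt_add hk hcos).const_mul l₂)).add ((hasDerivAt_cos θ).const_mul (2 * l₀))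
  have hF₀ : HasDerivAt (fun x ↦ l₁ * (cos x / √(k x ^ 2 - 2 * k x * sin x + 1))
      + l₂ * (cos x / √(k x ^ 2 + 2 * k x * sin x + 1)) + 2 * l₀ * cos x) 0 θ := by
    refine (hasDerivAt_const θ s).congr_of_eventuallyEq ?_
    filter_upwards [isOpen_Ioo.mem_nhds hθ] with x hx
    simpa only [hg₁, hg₂, mul_div_assoc] using hcon x hx
  have hzero := hF.unique hF₀
  rw [hg₁, hg₂] at hne ⊢
  rw [eq_div_iff (mul_ne_zero hne hcos)]
  linear_combination -hzero

/-- Implicit derivative of `k` along the suspension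
constraint `l₁ cosθ/g₁ + l₂ cosθ/g₂ + 2l₀ cosθ = s`, where
`g₁ = √(k² - 2k sinθ + 1)`, `g₂ = √(k² + 2k sinθ + 1)`. -/
theorem stmt_12 (l₀ l₁ l₂ s : ℝ)
    (hl₀ : 0 < l₀) (hl₁ : 0 < l₁) (hl₂ : 0 < l₂) (hs : 0 < s)
    (a b : ℝ) (hI : Set.Ioo a b ⊆ Set.Ioo (-(π/2)) (π/2))
    (k : ℝ → ℝ)
    (hkdiff : ∀ θ ∈ Set.Ioo a b, DifferentiableAt ℝ k θ)
    (hkpos : ∀ θ ∈ Set.Ioo a b, 0 < k θ)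
    (g₁ g₂ : ℝ → ℝ)
    (hg₁ : ∀ θ : ℝ, g₁ θ = Real.sqrt ((k θ)^2 - 2 * k θ * Real.sin θ + 1))
    (hg₂ : ∀ θ : ℝ, g₂ θ = Real.sqrt ((k θ)^2 + 2 * k θ * Real.sin θ + 1))
    (hcon : ∀ θ ∈ Set.Ioo a b,
      l₁ * Real.cos θ / g₁ θ + l₂ * Real.cos θ / g₂ θ + 2 * l₀ * Real.cos θ = s) :
    ∀ θ ∈ Set.Ioo a b,
      l₁ * (k θ - Real.sin θ) / (g₁ θ)^3 + l₂ * (k θ + Real.sin θ) / (g₂ θ)^3 ≠ 0 →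
      deriv k θ
        = -((l₁ / (g₁ θ)^3) * (k θ - Real.sin θ) * (k θ * Real.sin θ - 1)
            + (l₂ / (g₂ θ)^3) * (k θ + Real.sin θ) * (k θ * Real.sin θ + 1)
            + 2 * l₀ * Real.sin θ)
          / ((l₁ * (k θ - Real.sin θ) / (g₁ θ)^3
              + l₂ * (k θ + Real.sin θ) / (g₂ θ)^3) * Real.cos θ) :=
  stmt_12_general l₀ l₁ l₂ s a b hI k hkdiff g₁ g₂ hg₁ hg₂ hcon
end

section
/- Let l₀, l₁, l₂, s > 0, h₁ ∈ ℝ, and let I ⊆ (-π/2, π/2) be an open interval. Let k : I → ℝ be differentiable with k(θ) > 0 satisfying the suspension constraint l₁ cos θ / g₁ + l₂ cos θ / g₂ + 2 l₀ cos θ = s on I, where g₁ = √(k² - 2k sin θ + 1), g₂ = √(k² + 2k sin θ + 1). Define the follower height h₂(θ) = l₂ (k + sin θ)/g₂ + 2 l₀ sin θ - l₁ (k - sin θ)/g₁ + h₁. Then at every θ ∈ I where l₁(k - sin θ)/g₁³ + l₂(k + sin θ)/g₂³ ≠ 0, h₂'(θ) = k cos θ · [ 4 l₁ l₂ /(g₁³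 g₂³) + 2 l₀ ( l₂/g₂³ + l₁/g₁³ ) ] / [ l₁(k - sin θ)/g₁³ + l₂(k + sin θ)/g₂³ ]. -/
/-!
With `A = k - sin θ`, `B = k + sin θ`, the radicands are `g₁² = A² + cos² θ` and
`g₂² = B² + cos² θ`, so `(cos α, sin α) = (A, cos θ) / g₁` and `(cos β, sin β) = (B, cos θ) / g₂`
are unit vectors along the cables. A normalized vector `(x, y) / r` turns with derivative
`(y, -x) (y x' - x y') / r³`, and for the two cables the rates `y x' - x y'` are
`cos θ k' + k sin θ ∓ 1`: they differ by exactly `2`. Differentiating the suspension constraint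
expresses the common unknown `cos θ k' + k sin θ` through the geometry, and substituting it into
the derivative of `h₂` gives the formula.
-/

open Real

section NormalizedVector

variable {x y : ℝ → ℝ} {x' y' t : ℝ}

theorem HasDerivAt.div_sqrt_sq_add_sq (hx : HasDerivAt x x' t) (hy : HasDerivAt y y' t)
    (h : x t ^ 2 + y t ^ 2 ≠ 0) :
    HasDerivAt (fun u => x u / √(x u ^ 2 + y u ^ 2))
      (y t * (y t * x' - x t * y') / √(x t ^ 2 + y t ^ 2) ^ 3) t := by
  have hpos : 0 < x t ^ 2 + y t ^ 2 := lt_of_le_of_ne (by positivity) h.symm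
  have hr : √(x t ^ 2 + y t ^ 2) ≠ 0 := (sqrt_pos.2 hpos).ne'
  have hr_sq : √(x t ^ 2 + y t ^ 2) ^ 2 = x t ^ 2 + y t ^ 2 := sq_sqrt hpos.le
  have hsqrt := ((hx.fun_pow 2).fun_add (hy.fun_pow 2)).sqrt h
  refine (hx.div hsqrt hr).congr_deriv ?_
  field_simp
  rw [hr_sq]
  ring

theorem HasDerivAt.div_sqrt_sq_add_sq' (hx : HasDerivAt x x' t) (hy : HasDerivAt y y' t)
    (h : x t ^ 2 + y t ^ 2 ≠ 0) :
    HasDerivAt (fun u => y u / √(x u ^ 2 + y u ^ 2))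
      (x t * (x t * y' - y t * x') / √(x t ^ 2 + y t ^ 2) ^ 3) t := by
  simpa only [add_comm (y _ ^ 2)] using hy.div_sqrt_sq_add_sq hx (by rwa [add_comm])

end NormalizedVector

theorem sq_sub_two_mul_mul_sin_add_one (k θ : ℝ) :
    k ^ 2 - 2 * k * sin θ + 1 = (k - sin θ) ^ 2 + cos θ ^ 2 := by
  linear_combination -sin_sq_add_cos_sq θ

theorem sq_add_two_mul_mul_sin_add_one (k θ : ℝ) :
    k ^ 2 + 2 * k * sin θ + 1 = (k + sin θ) ^ 2 + cos θ ^ 2 := by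
  linear_combination -sin_sq_add_cos_sq θ

theorem stmt_13_general (l₀ l₁ l₂ s h₁ : ℝ)
    (a b : ℝ) (hI : Set.Ioo a b ⊆ Set.Ioo (-(π/2)) (π/2))
    (k : ℝ → ℝ)
    (hkdiff : ∀ θ ∈ Set.Ioo a b, DifferentiableAt ℝ k θ)
    (g₁ g₂ h₂ : ℝ → ℝ)
    (hg₁ : ∀ θ : ℝ, g₁ θ = Real.sqrt ((k θ)^2 - 2 * k θ * Real.sin θ + 1))
    (hg₂ : ∀ θ : ℝ, g₂ θ = Real.sqrt ((k θ)^2 + 2 * k θ * Real.sin θ + 1))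
    (hcon : ∀ θ ∈ Set.Ioo a b,
      l₁ * Real.cos θ / g₁ θ + l₂ * Real.cos θ / g₂ θ + 2 * l₀ * Real.cos θ = s)
    (hh₂ : ∀ θ : ℝ, h₂ θ = l₂ * (k θ + Real.sin θ) / g₂ θ + 2 * l₀ * Real.sin θ
      - l₁ * (k θ - Real.sin θ) / g₁ θ + h₁) :
    ∀ θ ∈ Set.Ioo a b,
      l₁ * (k θ - Real.sin θ) / (g₁ θ)^3 + l₂ * (k θ + Real.sin θ) / (g₂ θ)^3 ≠ 0 →
      deriv h₂ θ
        = k θ * Real.cos θ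
            * (4 * l₁ * l₂ / ((g₁ θ)^3 * (g₂ θ)^3)
              + 2 * l₀ * (l₂ / (g₂ θ)^3 + l₁ / (g₁ θ)^3))
          / (l₁ * (k θ - Real.sin θ) / (g₁ θ)^3
              + l₂ * (k θ + Real.sin θ) / (g₂ θ)^3) := by
  intro θ hθ hD
  have hcos : cos θ ≠ 0 := (cos_pos_of_mem_Ioo (hI hθ)).ne'
  have hk := (hkdiff θ hθ).hasDerivAt
  obtain rfl : g₁ = fun t => √((k t - sin t) ^ 2 + cos t ^ 2) :=
    funext fun t => by rw [hg₁, sq_sub_two_mul_mul_sin_add_one]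
  obtain rfl : g₂ = fun t => √((k t + sin t) ^ 2 + cos t ^ 2) :=
    funext fun t => by rw [hg₂, sq_add_two_mul_mul_sin_add_one]
  simp only [mul_div_assoc] at hcon hh₂
  have hx₁ := hk.fun_sub (hasDerivAt_sin θ)
  have hx₂ := hk.fun_add (hasDerivAt_sin θ)
  have hr₁ : (k θ - sin θ) ^ 2 + cos θ ^ 2 ≠ 0 := by positivity
  have hr₂ : (k θ + sin θ) ^ 2 + cos θ ^ 2 ≠ 0 := by positivity
  have hconstraint_deriv := ((((hx₁.div_sqrt_sq_add_sq' (hasDerivAt_cos θ) hr₁).const_mul l₁).fun_add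
      ((hx₂.div_sqrt_sq_add_sq' (hasDerivAt_cos θ) hr₂).const_mul l₂)).fun_add
      ((hasDerivAt_cos θ).const_mul (2 * l₀))).unique <|
    (hasDerivAt_const θ s).congr_of_eventuallyEq <|
      Filter.eventually_of_mem (isOpen_Ioo.mem_nhds hθ) hcon
  have hh₂' := ((((hx₂.div_sqrt_sq_add_sq (hasDerivAt_cos θ) hr₂).const_mul l₂).fun_add
      ((hasDerivAt_sin θ).const_mul (2 * l₀))).fun_sub
      ((hx₁.div_sqrt_sq_add_sq (hasDerivAt_cos θ) hr₁).const_mul l₁)).add_const h₁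
  rw [funext hh₂, hh₂'.deriv, eq_div_iff hD]
  set r₁ := √((k θ - sin θ) ^ 2 + cos θ ^ 2)
  set r₂ := √((k θ + sin θ) ^ 2 + cos θ ^ 2)
  linear_combination -(cos θ * (l₂ / r₂ ^ 3 - l₁ / r₁ ^ 3)) * hconstraint_deriv
    + 4 * cos θ * k θ * l₁ * l₂ / (r₁ ^ 3 * r₂ ^ 3) * sin_sq_add_cos_sq θ

/-- Derivative of the follower height
`h₂(θ) = l₂(k+sinθ)/g₂ + 2l₀ sinθ - l₁(k-sinθ)/g₁ + h₁` along the suspension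
constraint `l₁ cosθ/g₁ + l₂ cosθ/g₂ + 2l₀ cosθ = s`. -/
theorem stmt_13 (l₀ l₁ l₂ s h₁ : ℝ)
    (hl₀ : 0 < l₀) (hl₁ : 0 < l₁) (hl₂ : 0 < l₂) (hs : 0 < s)
    (a b : ℝ) (hI : Set.Ioo a b ⊆ Set.Ioo (-(π/2)) (π/2))
    (k : ℝ → ℝ)
    (hkdiff : ∀ θ ∈ Set.Ioo a b, DifferentiableAt ℝ k θ)
    (hkpos : ∀ θ ∈ Set.Ioo a b, 0 < k θ)
    (g₁ g₂ h₂ : ℝ → ℝ)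
    (hg₁ : ∀ θ : ℝ, g₁ θ = Real.sqrt ((k θ)^2 - 2 * k θ * Real.sin θ + 1))
    (hg₂ : ∀ θ : ℝ, g₂ θ = Real.sqrt ((k θ)^2 + 2 * k θ * Real.sin θ + 1))
    (hcon : ∀ θ ∈ Set.Ioo a b,
      l₁ * Real.cos θ / g₁ θ + l₂ * Real.cos θ / g₂ θ + 2 * l₀ * Real.cos θ = s)
    (hh₂ : ∀ θ : ℝ, h₂ θ = l₂ * (k θ + Real.sin θ) / g₂ θ + 2 * l₀ * Real.sin θ
      - l₁ * (k θ - Real.sin θ) / g₁ θ + h₁) :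
    ∀ θ ∈ Set.Ioo a b,
      l₁ * (k θ - Real.sin θ) / (g₁ θ)^3 + l₂ * (k θ + Real.sin θ) / (g₂ θ)^3 ≠ 0 →
      deriv h₂ θ
        = k θ * Real.cos θ
            * (4 * l₁ * l₂ / ((g₁ θ)^3 * (g₂ θ)^3)
              + 2 * l₀ * (l₂ / (g₂ θ)^3 + l₁ / (g₁ θ)^3))
          / (l₁ * (k θ - Real.sin θ) / (g₁ θ)^3
              + l₂ * (k θ + Real.sin θ) / (g₂ θ)^3) :=
  stmt_13_general l₀ l₁ l₂ s h₁ a b hI k hkdiff g₁ g₂ h₂ hg₁ hg₂ hcon hh₂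
end

section
/- Let m₀, g, l₀, l₁, l₂, s > 0 and let I ⊆ (-π/2, π/2) be an open interval. Let k : I → ℝ be differentiable with k(θ) > |sin θ| for all θ ∈ I, satisfying the suspension constraint l₁ cos θ / g₁ + l₂ cos θ / g₂ + 2 l₀ cos θ = s on I, where g₁ = √(k² - 2k sin θ + 1), g₂ = √(k² + 2k sin θ + 1). Define F(θ) = m₀ g sin θ / k(θ) (the quantity t₀ sin θ₀) and h₂(θ) = l₂ (k + sin θ)/g₂ + 2 l₀ sin θ - l₁ (k - sin θ)/g₁ + h₁. Then for every θ ∈ I, h₂'(θ) > 0 and F'(θ) / (-h₂'(θ)) = -(m₀ g /(k³ cos²θ)) · [ (l₁/g₁³)(k - sin θ)² + (l₂/g₂³)(k + sin θ)² + 2 l₀ sin²θ ] / [ 4 l₁ l₂/(g₁³ g₂³) + 2 l₀ (l₁/g₁³ + l₂/g₂³) ], and this quantity is strictly negative. Consequently t₀ sin θ₀ is a strictly decreasing function of the vertical position error p̃₂z = -h₂ - p₂dz of quadrotor 2. -/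
/-!
With `p₁ = k - sin θ`, `p₂ = k + sin θ` one has `gᵢ = √(pᵢ² + cos² θ)`, so `(pᵢ, cos θ) / gᵢ` is
a unit vector whose derivative is `Wᵢ / gᵢ³ • (cos θ, -pᵢ)`; here `W₁ = w - 1`, `W₂ = w + 1` with
`w = k' cos θ + k sin θ`. Differentiating the (locally constant) constraint gives one linear
relation for `w`. With `aᵢ = lᵢ / gᵢ³` and `D = a₁ p₁ + a₂ p₂ > 0` this relation yields
`D h₂' = k cos θ (4 a₁ a₂ + 2 l₀ (a₁ + a₂))` and
`D cos θ (k cos θ - k' sin θ) = a₁ p₁² + a₂ p₂² + 2 l₀ sin² θ`.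
Both right-hand sides are positive, hence so are `h₂'` and `F' = m₀ g (k cos θ - k' sin θ) / k²`;
their quotient is the closed form, and strict monotonicity of `h₂` and `F` gives the last claim.
-/

open Real Filter Set Topology

theorem HasDerivAt.div_sqrt_sq_add_sq_s14 {p q : ℝ → ℝ} {p' q' x : ℝ} (hp : HasDerivAt p p' x)
    (hq : HasDerivAt q q' x) (hpq : 0 < p x ^ 2 + q x ^ 2) :
    HasDerivAt (fun t => p t / √(p t ^ 2 + q t ^ 2))
      (q x * (p' * q x - p x * q') / √(p x ^ 2 + q x ^ 2) ^ 3) x := by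
  have hr : HasDerivAt (fun t => √(p t ^ 2 + q t ^ 2))
      ((p x * p' + q x * q') / √(p x ^ 2 + q x ^ 2)) x := by
    convert ((hp.fun_pow 2).fun_add (hq.fun_pow 2)).sqrt hpq.ne' using 1
    field_simp
    norm_num
    ring
  refine (hp.div hr (sqrt_pos.2 hpq).ne').congr_deriv ?_
  field_simp
  linear_combination p' * sq_sqrt hpq.le

theorem HasDerivAt.div_sqrt_sq_add_sq'_s14 {p q : ℝ → ℝ} {p' q' x : ℝ} (hp : HasDerivAt p p' x)
    (hq : HasDerivAt q q' x) (hpq : 0 < p x ^ 2 + q x ^ 2) :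
    HasDerivAt (fun t => q t / √(p t ^ 2 + q t ^ 2))
      (-(p x * (p' * q x - p x * q')) / √(p x ^ 2 + q x ^ 2) ^ 3) x := by
  have h := hq.div_sqrt_sq_add_sq_s14 hp (by linarith)
  simp only [add_comm (q _ ^ 2)] at h
  exact h.congr_deriv (by ring)

theorem strictMonoOn_Ioo_of_hasDerivAt_pos {f : ℝ → ℝ} {a b : ℝ}
    (hf : ∀ x ∈ Ioo a b, ∃ f', HasDerivAt f f' x ∧ 0 < f') : StrictMonoOn f (Ioo a b) := by
  refine strictMonoOn_of_deriv_pos (convex_Ioo a b) (fun x hx => ?_) (fun x hx => ?_)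
  · obtain ⟨f', hd, -⟩ := hf x hx
    exact hd.continuousAt.continuousWithinAt
  · rw [interior_Ioo] at hx
    obtain ⟨f', hd, hpos⟩ := hf x hx
    rwa [hd.deriv]

namespace Suspension

theorem height_rate_identity (a₁ a₂ l₀ K S w : ℝ)
    (h : a₁ * (K - S) * (w - 1) + a₂ * (K + S) * (w + 1) + 2 * l₀ * S = 0) :
    (a₁ * (K - S) + a₂ * (K + S)) * (a₂ * (w + 1) + 2 * l₀ - a₁ * (w - 1))
      = K * (4 * a₁ * a₂ + 2 * l₀ * (a₁ + a₂)) := by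
  linear_combination (a₂ - a₁) * h

theorem force_rate_identity (a₁ a₂ l₀ K S C K' : ℝ) (hSC : S ^ 2 + C ^ 2 = 1)
    (h : a₁ * (K - S) * (K' * C + K * S - 1) + a₂ * (K + S) * (K' * C + K * S + 1)
      + 2 * l₀ * S = 0) :
    C * (a₁ * (K - S) + a₂ * (K + S)) * (C * K - S * K')
      = a₁ * (K - S) ^ 2 + a₂ * (K + S) ^ 2 + 2 * l₀ * S ^ 2 := by
  linear_combination (-S) * h + (a₁ * (K - S) + a₂ * (K + S)) * K * hSC

variable {k : ℝ → ℝ} {K' θ : ℝ}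

theorem constraint_rate_eq_zero (l₀ l₁ l₂ s : ℝ) (hk : HasDerivAt k K' θ) (hC : 0 < cos θ)
    (hcon : ∀ᶠ t in 𝓝 θ, l₁ * cos t / √((k t - sin t) ^ 2 + cos t ^ 2)
      + l₂ * cos t / √((k t + sin t) ^ 2 + cos t ^ 2) + 2 * l₀ * cos t = s) :
    l₁ / √((k θ - sin θ) ^ 2 + cos θ ^ 2) ^ 3 * (k θ - sin θ) * (K' * cos θ + k θ * sin θ - 1)
      + l₂ / √((k θ + sin θ) ^ 2 + cos θ ^ 2) ^ 3 * (k θ + sin θ)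
        * (K' * cos θ + k θ * sin θ + 1) + 2 * l₀ * sin θ = 0 := by
  have d₁ := ((hk.fun_sub (hasDerivAt_sin θ)).div_sqrt_sq_add_sq'_s14 (hasDerivAt_cos θ)
    (by positivity)).const_mul l₁
  have d₂ := ((hk.fun_add (hasDerivAt_sin θ)).div_sqrt_sq_add_sq'_s14 (hasDerivAt_cos θ)
    (by positivity)).const_mul l₂
  have h0 := ((d₁.fun_add d₂).fun_add ((hasDerivAt_cos θ).const_mul (2 * l₀))).unique
    ((hasDerivAt_const θ s).congr_of_eventuallyEq (hcon.mono fun t ht => by rw [← ht]; ring))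
  linear_combination (-1 : ℝ) * h0
    + (l₁ / √((k θ - sin θ) ^ 2 + cos θ ^ 2) ^ 3 * (k θ - sin θ)
      - l₂ / √((k θ + sin θ) ^ 2 + cos θ ^ 2) ^ 3 * (k θ + sin θ)) * sin_sq_add_cos_sq θ

theorem hasDerivAt_height (l₀ l₁ l₂ h₁ : ℝ) (hk : HasDerivAt k K' θ) (hC : 0 < cos θ) :
    HasDerivAt (fun t => l₂ * (k t + sin t) / √((k t + sin t) ^ 2 + cos t ^ 2)
        + 2 * l₀ * sin t - l₁ * (k t - sin t) / √((k t - sin t) ^ 2 + cos t ^ 2) + h₁)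
      (cos θ * (l₂ / √((k θ + sin θ) ^ 2 + cos θ ^ 2) ^ 3 * (K' * cos θ + k θ * sin θ + 1)
        + 2 * l₀
        - l₁ / √((k θ - sin θ) ^ 2 + cos θ ^ 2) ^ 3 * (K' * cos θ + k θ * sin θ - 1))) θ := by
  have d₁ := ((hk.fun_sub (hasDerivAt_sin θ)).div_sqrt_sq_add_sq_s14 (hasDerivAt_cos θ)
    (by positivity)).const_mul l₁
  have d₂ := ((hk.fun_add (hasDerivAt_sin θ)).div_sqrt_sq_add_sq_s14 (hasDerivAt_cos θ)
    (by positivity)).const_mul l₂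
  refine ((((d₂.fun_add ((hasDerivAt_sin θ).const_mul (2 * l₀))).fun_sub d₁).add_const
    h₁).congr_deriv ?_).congr_of_eventuallyEq (.of_eq (funext fun t => by ring))
  linear_combination cos θ * (l₂ / √((k θ + sin θ) ^ 2 + cos θ ^ 2) ^ 3
    + l₁ / √((k θ - sin θ) ^ 2 + cos θ ^ 2) ^ 3) * sin_sq_add_cos_sq θ

theorem sqrt_sq_sub_two_mul_sin_add_one (K θ : ℝ) :
    √(K ^ 2 - 2 * K * sin θ + 1) = √((K - sin θ) ^ 2 + cos θ ^ 2) := by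
  congr 1
  linear_combination (-1 : ℝ) * sin_sq_add_cos_sq θ

theorem sqrt_sq_add_two_mul_sin_add_one (K θ : ℝ) :
    √(K ^ 2 + 2 * K * sin θ + 1) = √((K + sin θ) ^ 2 + cos θ ^ 2) := by
  congr 1
  linear_combination (-1 : ℝ) * sin_sq_add_cos_sq θ

theorem exists_hasDerivAt_height_force {m l₀ l₁ l₂ s h₁ : ℝ} {g₁ g₂ F h₂ : ℝ → ℝ}
    (hm : 0 < m) (hl₀ : 0 < l₀) (hl₁ : 0 < l₁) (hl₂ : 0 < l₂) (hk : HasDerivAt k K' θ)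
    (hC : 0 < cos θ) (hkθ : |sin θ| < k θ)
    (hg₁ : ∀ t, g₁ t = √(k t ^ 2 - 2 * k t * sin t + 1))
    (hg₂ : ∀ t, g₂ t = √(k t ^ 2 + 2 * k t * sin t + 1))
    (hcon : ∀ᶠ t in 𝓝 θ, l₁ * cos t / g₁ t + l₂ * cos t / g₂ t + 2 * l₀ * cos t = s)
    (hF : ∀ t, F t = m * sin t / k t)
    (hh₂ : ∀ t, h₂ t = l₂ * (k t + sin t) / g₂ t + 2 * l₀ * sin t
      - l₁ * (k t - sin t) / g₁ t + h₁) :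
    ∃ h₂' F', HasDerivAt h₂ h₂' θ ∧ HasDerivAt F F' θ ∧ 0 < h₂' ∧ 0 < F' ∧
      F' / -h₂' = -(m / (k θ ^ 3 * cos θ ^ 2))
        * (l₁ / g₁ θ ^ 3 * (k θ - sin θ) ^ 2 + l₂ / g₂ θ ^ 3 * (k θ + sin θ) ^ 2
          + 2 * l₀ * sin θ ^ 2)
        / (4 * l₁ * l₂ / (g₁ θ ^ 3 * g₂ θ ^ 3) + 2 * l₀ * (l₁ / g₁ θ ^ 3 + l₂ / g₂ θ ^ 3)) := by
  obtain ⟨hKS₁, hKS₂⟩ := abs_lt.1 hkθ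
  have hK : 0 < k θ := by linarith
  obtain rfl : F = _ := funext hF
  obtain rfl : h₂ = _ := funext hh₂
  simp only [hg₁, hg₂, sqrt_sq_sub_two_mul_sin_add_one, sqrt_sq_add_two_mul_sin_add_one]
    at hcon ⊢
  have hw := constraint_rate_eq_zero l₀ l₁ l₂ s hk hC hcon
  set a₁ := l₁ / √((k θ - sin θ) ^ 2 + cos θ ^ 2) ^ 3
  set a₂ := l₂ / √((k θ + sin θ) ^ 2 + cos θ ^ 2) ^ 3
  rw [show 4 * l₁ * l₂ / (√((k θ - sin θ) ^ 2 + cos θ ^ 2) ^ 3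
    * √((k θ + sin θ) ^ 2 + cos θ ^ 2) ^ 3) = 4 * a₁ * a₂ by ring]
  have hheight := height_rate_identity a₁ a₂ l₀ (k θ) (sin θ) _ hw
  have hforce := force_rate_identity a₁ a₂ l₀ (k θ) (sin θ) (cos θ) K' (sin_sq_add_cos_sq θ) hw
  set D := a₁ * (k θ - sin θ) + a₂ * (k θ + sin θ)
  set E := a₂ * (K' * cos θ + k θ * sin θ + 1) + 2 * l₀ - a₁ * (K' * cos θ + k θ * sin θ - 1)
  have hD : 0 < D := add_pos (mul_pos (by positivity) (by linarith))
    (mul_pos (by positivity) (by linarith))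
  have hE : 0 < E := pos_of_mul_pos_right (by rw [hheight]; positivity) hD.le
  have hZ : 0 < cos θ * k θ - sin θ * K' :=
    pos_of_mul_pos_right (by rw [hforce]; positivity) (mul_pos hC hD).le
  refine ⟨cos θ * E, m * (cos θ * k θ - sin θ * K') / k θ ^ 2,
    hasDerivAt_height l₀ l₁ l₂ h₁ hk hC,
    (((hasDerivAt_sin θ).const_mul m).div hk hK.ne').congr_deriv (by ring),
    mul_pos hC hE, by positivity, ?_⟩
  have hY : 4 * a₁ * a₂ + 2 * l₀ * (a₁ + a₂) = D * E / k θ := by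
    rw [eq_div_iff hK.ne', hheight]
    ring
  rw [← hforce, hY]
  field_simp

end Suspension

theorem stmt_14_general (m₀ g l₀ l₁ l₂ s h₁ p₂dz : ℝ)
    (hm₀ : 0 < m₀) (hg : 0 < g)
    (hl₀ : 0 < l₀) (hl₁ : 0 < l₁) (hl₂ : 0 < l₂)
    (a b : ℝ) (hI : Set.Ioo a b ⊆ Set.Ioo (-(π/2)) (π/2))
    (k : ℝ → ℝ)
    (hkdiff : ∀ θ ∈ Set.Ioo a b, DifferentiableAt ℝ k θ)
    (hk : ∀ θ ∈ Set.Ioo a b, |Real.sin θ| < k θ)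
    (g₁ g₂ F h₂ : ℝ → ℝ)
    (hg₁ : ∀ θ : ℝ, g₁ θ = Real.sqrt ((k θ)^2 - 2 * k θ * Real.sin θ + 1))
    (hg₂ : ∀ θ : ℝ, g₂ θ = Real.sqrt ((k θ)^2 + 2 * k θ * Real.sin θ + 1))
    (hcon : ∀ θ ∈ Set.Ioo a b,
      l₁ * Real.cos θ / g₁ θ + l₂ * Real.cos θ / g₂ θ + 2 * l₀ * Real.cos θ = s)
    (hF : ∀ θ : ℝ, F θ = m₀ * g * Real.sin θ / k θ)
    (hh₂ : ∀ θ : ℝ, h₂ θ = l₂ * (k θ + Real.sin θ) / g₂ θ + 2 * l₀ * Real.sin θ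
      - l₁ * (k θ - Real.sin θ) / g₁ θ + h₁) :
    (∀ θ ∈ Set.Ioo a b,
      0 < deriv h₂ θ ∧
      deriv F θ / (-(deriv h₂ θ))
        = -(m₀ * g / ((k θ)^3 * Real.cos θ^2))
            * ((l₁ / (g₁ θ)^3) * (k θ - Real.sin θ)^2
              + (l₂ / (g₂ θ)^3) * (k θ + Real.sin θ)^2
              + 2 * l₀ * Real.sin θ^2)
            / (4 * l₁ * l₂ / ((g₁ θ)^3 * (g₂ θ)^3)
              + 2 * l₀ * (l₁ / (g₁ θ)^3 + l₂ / (g₂ θ)^3)) ∧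
      deriv F θ / (-(deriv h₂ θ)) < 0) ∧
    (∀ θa ∈ Set.Ioo a b, ∀ θb ∈ Set.Ioo a b,
      (-(h₂ θa) - p₂dz) < (-(h₂ θb) - p₂dz) → F θb < F θa) := by
  have key := fun θ (hθ : θ ∈ Set.Ioo a b) =>
    Suspension.exists_hasDerivAt_height_force (mul_pos hm₀ hg) hl₀ hl₁ hl₂
      (hkdiff θ hθ).hasDerivAt (cos_pos_of_mem_Ioo (hI hθ)) (hk θ hθ) hg₁ hg₂
      (eventually_of_mem (Ioo_mem_nhds hθ.1 hθ.2) hcon) hF hh₂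
  refine ⟨fun θ hθ => ?_, fun θa ha θb hb hlt => ?_⟩
  · obtain ⟨h₂', F', hh₂', hF', hh₂'_pos, hF'_pos, hratio⟩ := key θ hθ
    rw [hh₂'.deriv, hF'.deriv]
    exact ⟨hh₂'_pos, hratio, div_neg_of_pos_of_neg hF'_pos (neg_neg_of_pos hh₂'_pos)⟩
  · have hh₂_mono := strictMonoOn_Ioo_of_hasDerivAt_pos fun θ hθ =>
      (key θ hθ).imp fun _ ⟨_, hh₂', _, hh₂'_pos, _⟩ => ⟨hh₂', hh₂'_pos⟩
    have hF_mono := strictMonoOn_Ioo_of_hasDerivAt_pos fun θ hθ =>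
      (key θ hθ).elim fun _ ⟨F', _, hF', _, hF'_pos, _⟩ => ⟨F', hF', hF'_pos⟩
    exact hF_mono hb ha ((hh₂_mono.lt_iff_lt hb ha).1 (by linarith))

/-- Monotonicity of `t₀ sin θ₀` as a function of the vertical
position error of quadrotor 2: along the suspension constraint, `h₂' > 0`,
`F'/(-h₂')` has the stated closed form and is strictly negative, hence
`F = t₀ sin θ₀` is strictly decreasing in `p̃₂z = -h₂ - p₂dz`. -/
theorem stmt_14 (m₀ g l₀ l₁ l₂ s h₁ p₂dz : ℝ)
    (hm₀ : 0 < m₀) (hg : 0 < g)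
    (hl₀ : 0 < l₀) (hl₁ : 0 < l₁) (hl₂ : 0 < l₂) (hs : 0 < s)
    (a b : ℝ) (hI : Set.Ioo a b ⊆ Set.Ioo (-(π/2)) (π/2))
    (k : ℝ → ℝ)
    (hkdiff : ∀ θ ∈ Set.Ioo a b, DifferentiableAt ℝ k θ)
    (hk : ∀ θ ∈ Set.Ioo a b, |Real.sin θ| < k θ)
    (g₁ g₂ F h₂ : ℝ → ℝ)
    (hg₁ : ∀ θ : ℝ, g₁ θ = Real.sqrt ((k θ)^2 - 2 * k θ * Real.sin θ + 1))
    (hg₂ : ∀ θ : ℝ, g₂ θ = Real.sqrt ((k θ)^2 + 2 * k θ * Real.sin θ + 1))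
    (hcon : ∀ θ ∈ Set.Ioo a b,
      l₁ * Real.cos θ / g₁ θ + l₂ * Real.cos θ / g₂ θ + 2 * l₀ * Real.cos θ = s)
    (hF : ∀ θ : ℝ, F θ = m₀ * g * Real.sin θ / k θ)
    (hh₂ : ∀ θ : ℝ, h₂ θ = l₂ * (k θ + Real.sin θ) / g₂ θ + 2 * l₀ * Real.sin θ
      - l₁ * (k θ - Real.sin θ) / g₁ θ + h₁) :
    (∀ θ ∈ Set.Ioo a b,
      0 < deriv h₂ θ ∧
      deriv F θ / (-(deriv h₂ θ))
        = -(m₀ * g / ((k θ)^3 * Real.cos θ^2))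
            * ((l₁ / (g₁ θ)^3) * (k θ - Real.sin θ)^2
              + (l₂ / (g₂ θ)^3) * (k θ + Real.sin θ)^2
              + 2 * l₀ * Real.sin θ^2)
            / (4 * l₁ * l₂ / ((g₁ θ)^3 * (g₂ θ)^3)
              + 2 * l₀ * (l₁ / (g₁ θ)^3 + l₂ / (g₂ θ)^3)) ∧
      deriv F θ / (-(deriv h₂ θ)) < 0) ∧
    (∀ θa ∈ Set.Ioo a b, ∀ θb ∈ Set.Ioo a b,
      (-(h₂ θa) - p₂dz) < (-(h₂ θb) - p₂dz) → F θb < F θa) :=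
  stmt_14_general m₀ g l₀ l₁ l₂ s h₁ p₂dz hm₀ hg hl₀ hl₁ hl₂ a b hI k hkdiff hk g₁ g₂ F h₂ hg₁ hg₂
    hcon hF hh₂
end

section
/- (Upper sector bound σ̄ of Lemma 1.) Let m₀, g, l₀, l₁, l₂ > 0, s > 2l₀, θ* ∈ [0, π/2), and k̲ > 0. Let θ ∈ ℝ with |θ| ≤ θ*, and let k ≥ k̲ with k > |sin θ| satisfy the suspension constraint l₁ cos θ / g₁ + l₂ cos θ / g₂ + 2 l₀ cos θ = s, where g₁ = √(k² - 2k sin θ + 1), g₂ = √(k² + 2k sin θ + 1). Then (m₀ g /(k³ cos²θ)) · [ (l₁/g₁³)(k - sin θ)² + (l₂/g₂³)(k + sin θ)² + 2 l₀ sin²θ ] / [ 4 l₁ l₂/(g₁³ g₂³) + 2 l₀ (l₁/g₁³ + l₂/g₂³) ] ≤ (m₀ g / k̲)(1 + 1/k̲)² · s / (2 l₀ cos²θ* (s - 2 l₀)) =: σ̄. -/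
set_option maxHeartbeats 1000000

open Real

private lemma stmt_15_aux (m₀ g l₀ l₁ l₂ s klo k S C cs gA gB : ℝ)
    (hm₀ : 0 < m₀) (hg : 0 < g)
    (hl₀ : 0 < l₀) (hl₁ : 0 < l₁) (hl₂ : 0 < l₂)
    (hs : 2 * l₀ < s)
    (hklo : 0 < klo) (hk : klo ≤ k) (hk0 : 0 < k)
    (hC : 0 < C) (hC1 : C ≤ 1) (hcs : 0 < cs) (hcsC : cs ≤ C)
    (hpyth : S^2 + C^2 = 1)
    (hgA : 0 < gA) (hgB : 0 < gB)
    (hgA2 : gA^2 = k^2 - 2*k*S + 1) (hgB2 : gB^2 = k^2 + 2*k*S + 1)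
    (hgAk : gA ≤ k + 1) (hgBk : gB ≤ k + 1)
    (hcon : l₁ * C / gA + l₂ * C / gB + 2 * l₀ * C = s) :
    (m₀ * g / (k^3 * C^2))
        * ((l₁ / gA^3) * (k - S)^2 + (l₂ / gB^3) * (k + S)^2 + 2 * l₀ * S^2)
        / (4 * l₁ * l₂ / (gA^3 * gB^3) + 2 * l₀ * (l₁ / gA^3 + l₂ / gB^3))
      ≤ (m₀ * g / klo) * (1 + 1/klo)^2 * s / (2 * l₀ * cs^2 * (s - 2 * l₀)) := by
  have hk1 : (0:ℝ) < k + 1 := by linarith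
  have hspos : 0 < s := by linarith
  have hs0 : 0 < s - 2*l₀ := by linarith
  -- constraint in divided form
  have hconC : l₁/gA + l₂/gB + 2*l₀ = s / C := by
    rw [eq_div_iff hC.ne', ← hcon]; ring
  -- numerator bound
  have hsqA : (k - S)^2 ≤ gA^2 := by nlinarith [mul_pos hC hC]
  have hsqB : (k + S)^2 ≤ gB^2 := by nlinarith [mul_pos hC hC]
  have hnum1 : l₁ / gA^3 * (k - S)^2 ≤ l₁ / gA := by
    rw [div_mul_eq_mul_div, div_le_div_iff₀ (by positivity) hgA]
    nlinarith [mul_le_mul_of_nonneg_right (mul_le_mul_of_nonneg_left hsqA hl₁.le) hgA.le]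
  have hnum2 : l₂ / gB^3 * (k + S)^2 ≤ l₂ / gB := by
    rw [div_mul_eq_mul_div, div_le_div_iff₀ (by positivity) hgB]
    nlinarith [mul_le_mul_of_nonneg_right (mul_le_mul_of_nonneg_left hsqB hl₂.le) hgB.le]
  have hnum3 : 2*l₀*S^2 ≤ 2*l₀ := by nlinarith [mul_pos hC hC]
  have hN : l₁/gA^3*(k-S)^2 + l₂/gB^3*(k+S)^2 + 2*l₀*S^2 ≤ s/C := by
    rw [← hconC]; linarith
  -- denominator bound
  have hfrac : (s - 2*l₀)/C ≤ l₁/gA + l₂/gB := by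
    have h2 : 2*l₀ ≤ 2*l₀/C := by rw [le_div_iff₀ hC]; nlinarith
    have hsC : (s-2*l₀)/C = s/C - 2*l₀/C := by ring
    linarith [hconC]
  have haA : l₁/(gA*(k+1)^2) ≤ l₁/gA^3 := by
    apply div_le_div_of_nonneg_left hl₁.le (by positivity)
    nlinarith [mul_nonneg (mul_nonneg hgA.le (sub_nonneg.2 hgAk)) (by linarith : (0:ℝ) ≤ k+1+gA)]
  have haB : l₂/(gB*(k+1)^2) ≤ l₂/gB^3 := by
    apply div_le_div_of_nonneg_left hl₂.le (by positivity)
    nlinarith [mul_nonneg (mul_nonneg hgB.le (sub_nonneg.2 hgBk)) (by linarith : (0:ℝ) ≤ k+1+gB)]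
  have hsum : (s-2*l₀)/((k+1)^2*C) ≤ l₁/gA^3 + l₂/gB^3 := by
    have e1 : (s-2*l₀)/((k+1)^2*C) = ((s-2*l₀)/C)/(k+1)^2 := by
      rw [div_div]; ring_nf
    have e2 : (l₁/gA + l₂/gB)/(k+1)^2 = l₁/(gA*(k+1)^2) + l₂/(gB*(k+1)^2) := by
      field_simp
    calc (s-2*l₀)/((k+1)^2*C) = ((s-2*l₀)/C)/(k+1)^2 := e1
      _ ≤ (l₁/gA + l₂/gB)/(k+1)^2 := by gcongr
      _ = l₁/(gA*(k+1)^2) + l₂/(gB*(k+1)^2) := e2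
      _ ≤ l₁/gA^3 + l₂/gB^3 := add_le_add haA haB
  have hD0pos : 0 < 2*l₀*(s-2*l₀)/((k+1)^2*C) :=
    div_pos (mul_pos (by positivity) hs0) (mul_pos (by positivity) hC)
  have hD : 2*l₀*(s-2*l₀)/((k+1)^2*C)
      ≤ 4*l₁*l₂/(gA^3*gB^3) + 2*l₀*(l₁/gA^3 + l₂/gB^3) := by
    have h4 : 0 ≤ 4*l₁*l₂/(gA^3*gB^3) := by positivity
    have h5 := mul_le_mul_of_nonneg_left hsum (by linarith : (0:ℝ) ≤ 2*l₀)
    have e : 2*l₀*((s-2*l₀)/((k+1)^2*C)) = 2*l₀*(s-2*l₀)/((k+1)^2*C) := by ring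
    linarith
  have hP : 0 < m₀*g/(k^3*C^2) := by positivity
  have hstep1 : m₀*g/(k^3*C^2) * (l₁/gA^3*(k-S)^2 + l₂/gB^3*(k+S)^2 + 2*l₀*S^2)
      / (4*l₁*l₂/(gA^3*gB^3) + 2*l₀*(l₁/gA^3 + l₂/gB^3))
      ≤ m₀*g/(k^3*C^2) * (s/C) / (2*l₀*(s-2*l₀)/((k+1)^2*C)) :=
    div_le_div₀ (by positivity) (mul_le_mul_of_nonneg_left hN hP.le) hD0pos hD
  have hmono : klo^3*(k+1)^2 ≤ k^3*(klo+1)^2 := by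
    have hd : 0 ≤ k - klo := by linarith
    have h1 : 0 ≤ k^2*klo^2*(k-klo) :=
      mul_nonneg (mul_nonneg (by positivity) (by positivity)) hd
    have h2 : 0 ≤ k*klo*((k-klo)*(k+klo)) :=
      mul_nonneg (mul_nonneg hk0.le hklo.le) (mul_nonneg hd (by linarith))
    have h3 : 0 ≤ (k-klo)*(k^2+k*klo+klo^2) :=
      mul_nonneg hd (by positivity)
    nlinarith [h1, h2, h3]
  have hcs2 : cs^2 ≤ C^2 := pow_le_pow_left₀ hcs.le hcsC 2
  have eL : m₀*g/(k^3*C^2) * (s/C) / (2*l₀*(s-2*l₀)/((k+1)^2*C))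
      = m₀*g*s*(k+1)^2 / (2*l₀*k^3*C^2*(s-2*l₀)) := by
    field_simp
  have eR : m₀*g/klo * (1+1/klo)^2 * s / (2*l₀*cs^2*(s-2*l₀))
      = m₀*g*s*(klo+1)^2 / (2*l₀*klo^3*cs^2*(s-2*l₀)) := by
    field_simp
  have hcore : (k+1)^2/(k^3*C^2) ≤ (klo+1)^2/(klo^3*cs^2) := by
    rw [div_le_div_iff₀ (by positivity) (by positivity)]
    have key := mul_le_mul hmono hcs2 (by positivity) (by positivity)
    linarith [key]
  have eL2 : m₀*g*s*(k+1)^2 / (2*l₀*k^3*C^2*(s-2*l₀))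
      = (m₀*g*s/(2*l₀*(s-2*l₀))) * ((k+1)^2/(k^3*C^2)) := by
    field_simp
  have eR2 : m₀*g*s*(klo+1)^2 / (2*l₀*klo^3*cs^2*(s-2*l₀))
      = (m₀*g*s/(2*l₀*(s-2*l₀))) * ((klo+1)^2/(klo^3*cs^2)) := by
    field_simp
  have hstep2 : m₀*g/(k^3*C^2) * (s/C) / (2*l₀*(s-2*l₀)/((k+1)^2*C))
      ≤ m₀*g/klo * (1+1/klo)^2 * s / (2*l₀*cs^2*(s-2*l₀)) := by
    rw [eL, eR, eL2, eR2]
    exact mul_le_mul_of_nonneg_left hcore (by positivity)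
  exact hstep1.trans hstep2

/-- Upper sector bound `σ̄` of Lemma 1: under the suspension
constraint, with `k ≥ k̲ > 0`, `k > |sin θ|`, `|θ| ≤ θ* < π/2` and `s > 2l₀`,
the slope expression is bounded above by
`σ̄ = (m₀ g/k̲)(1 + 1/k̲)² s / (2 l₀ cos²θ* (s - 2l₀))`. -/
theorem stmt_15 (m₀ g l₀ l₁ l₂ s θstar klo θ k : ℝ)
    (hm₀ : 0 < m₀) (hg : 0 < g)
    (hl₀ : 0 < l₀) (hl₁ : 0 < l₁) (hl₂ : 0 < l₂)
    (hs : 2 * l₀ < s)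
    (hθstar : 0 ≤ θstar) (hθstar' : θstar < π/2)
    (hklo : 0 < klo)
    (hθ : |θ| ≤ θstar)
    (hk : klo ≤ k) (hksin : |Real.sin θ| < k)
    (hcon : l₁ * Real.cos θ / Real.sqrt (k^2 - 2*k*Real.sin θ + 1)
          + l₂ * Real.cos θ / Real.sqrt (k^2 + 2*k*Real.sin θ + 1)
          + 2 * l₀ * Real.cos θ = s) :
    (m₀ * g / (k^3 * Real.cos θ^2))
        * ((l₁ / (Real.sqrt (k^2 - 2*k*Real.sin θ + 1))^3) * (k - Real.sin θ)^2
          + (l₂ / (Real.sqrt (k^2 + 2*k*Real.sin θ + 1))^3) * (k + Real.sin θ)^2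
          + 2 * l₀ * Real.sin θ^2)
        / (4 * l₁ * l₂ / ((Real.sqrt (k^2 - 2*k*Real.sin θ + 1))^3
              * (Real.sqrt (k^2 + 2*k*Real.sin θ + 1))^3)
          + 2 * l₀ * (l₁ / (Real.sqrt (k^2 - 2*k*Real.sin θ + 1))^3
              + l₂ / (Real.sqrt (k^2 + 2*k*Real.sin θ + 1))^3))
      ≤ (m₀ * g / klo) * (1 + 1/klo)^2
          * s / (2 * l₀ * Real.cos θstar^2 * (s - 2 * l₀)) := by
  have hk0 : 0 < k := lt_of_lt_of_le hklo hk
  have hθ2 := abs_lt.1 (lt_of_le_of_lt hθ hθstar')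
  have hC : 0 < Real.cos θ := Real.cos_pos_of_mem_Ioo ⟨hθ2.1, hθ2.2⟩
  have hCstar : 0 < Real.cos θstar :=
    Real.cos_pos_of_mem_Ioo ⟨by linarith [Real.pi_pos], hθstar'⟩
  have hCle : Real.cos θstar ≤ Real.cos θ := by
    rw [← Real.cos_abs θ]
    exact Real.cos_le_cos_of_nonneg_of_le_pi (abs_nonneg θ)
      (by linarith [Real.pi_pos]) hθ
  have hC1 : Real.cos θ ≤ 1 := Real.cos_le_one θ
  have hpyth := Real.sin_sq_add_cos_sq θ
  have hS1 : -1 ≤ Real.sin θ := Real.neg_one_le_sin θ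
  have hS2 : Real.sin θ ≤ 1 := Real.sin_le_one θ
  have hk1 : (0:ℝ) < k + 1 := by linarith
  have hApos : 0 < k^2 - 2*k*Real.sin θ + 1 := by
    nlinarith [sq_nonneg (k - Real.sin θ), mul_pos hC hC]
  have hBpos : 0 < k^2 + 2*k*Real.sin θ + 1 := by
    nlinarith [sq_nonneg (k + Real.sin θ), mul_pos hC hC]
  exact stmt_15_aux m₀ g l₀ l₁ l₂ s klo k (Real.sin θ) (Real.cos θ)
    (Real.cos θstar) (Real.sqrt (k^2 - 2*k*Real.sin θ + 1))
    (Real.sqrt (k^2 + 2*k*Real.sin θ + 1))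
    hm₀ hg hl₀ hl₁ hl₂ hs hklo hk hk0 hC hC1 hCstar hCle hpyth
    (Real.sqrt_pos.2 hApos) (Real.sqrt_pos.2 hBpos)
    (Real.sq_sqrt hApos.le) (Real.sq_sqrt hBpos.le)
    (by rw [show k+1 = Real.sqrt ((k+1)^2) from (Real.sqrt_sq hk1.le).symm]
        exact Real.sqrt_le_sqrt (by nlinarith))
    (by rw [show k+1 = Real.sqrt ((k+1)^2) from (Real.sqrt_sq hk1.le).symm]
        exact Real.sqrt_le_sqrt (by nlinarith))
    hcon
end

section
/- (Lower sector bound σ̲ of Lemma 1.) Let m₀, g, l₀, l₁, l₂ > 0, s > 2l₀, θ* ∈ [0, π/2), and κ ∈ (0, π/2). Let θ ∈ ℝ with |θ| ≤ θ*, and let k ≥ 1 satisfy the suspension constraint l₁ cos θ / g₁ + l₂ cos θ / g₂ + 2 l₀ cos θ = s, where g₁ = √(k² - 2k sin θ + 1), g₂ = √(k² + 2k sin θ + 1), and suppose the cable-angle bounds (k - sin θ)/g₁ ≥ cos κ and (k + sin θ)/g₂ ≥ cos κ hold. Then (m₀ g /(k³ cos²θ)) · [ (l₁/g₁³)(k -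 sin θ)² + (l₂/g₂³)(k + sin θ)² + 2 l₀ sin²θ ] / [ 4 l₁ l₂/(g₁³ g₂³) + 2 l₀ (l₁/g₁³ + l₂/g₂³) ] ≥ m₀ g (s - 2 l₀) cos²κ / ( 4 l₁ l₂ / cos³θ* + 2 l₀ l₁ + 2 l₀ l₂ ) =: σ̲ > 0. -/
open Real

private lemma aux_tb (t c : ℝ) (h : t^2 + c^2 = 1) (hc : 0 < c) : -1 < t ∧ t < 1 := by
  constructor <;> nlinarith

private lemma aux_pos (k t : ℝ) (h : t^2 < 1) : 0 < k^2 - 2*k*t + 1 := by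
  nlinarith [sq_nonneg (k - t)]

private lemma aux_kc (k t c : ℝ) (h : t^2 + c^2 = 1) : (k*c)^2 ≤ k^2 - 2*k*t + 1 := by
  nlinarith [sq_nonneg (k*t - 1)]

set_option maxHeartbeats 1600000 in
/-- Lower sector bound `σ̲` of Lemma 1: under the suspension
constraint, with `k ≥ 1`, `|θ| ≤ θ* < π/2`, and cable-angle bounds
`(k - sinθ)/g₁ ≥ cos κ`, `(k + sinθ)/g₂ ≥ cos κ` with `κ ∈ (0, π/2)`, the slope
expression is bounded below by
`σ̲ = m₀ g (s - 2l₀) cos²κ / (4l₁l₂/cos³θ* + 2l₀l₁ + 2l₀l₂) > 0`. -/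
theorem stmt_16 (m₀ g l₀ l₁ l₂ s θstar κ θ k : ℝ)
    (hm₀ : 0 < m₀) (hg : 0 < g)
    (hl₀ : 0 < l₀) (hl₁ : 0 < l₁) (hl₂ : 0 < l₂)
    (hs : 2 * l₀ < s)
    (hθstar : 0 ≤ θstar) (hθstar' : θstar < π/2)
    (hκ : 0 < κ) (hκ' : κ < π/2)
    (hθ : |θ| ≤ θstar)
    (hk : 1 ≤ k)
    (hcon : l₁ * Real.cos θ / Real.sqrt (k^2 - 2*k*Real.sin θ + 1)
          + l₂ * Real.cos θ / Real.sqrt (k^2 + 2*k*Real.sin θ + 1)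
          + 2 * l₀ * Real.cos θ = s)
    (hangle1 : Real.cos κ ≤ (k - Real.sin θ) / Real.sqrt (k^2 - 2*k*Real.sin θ + 1))
    (hangle2 : Real.cos κ ≤ (k + Real.sin θ) / Real.sqrt (k^2 + 2*k*Real.sin θ + 1)) :
    (m₀ * g / (k^3 * Real.cos θ^2))
        * ((l₁ / (Real.sqrt (k^2 - 2*k*Real.sin θ + 1))^3) * (k - Real.sin θ)^2
          + (l₂ / (Real.sqrt (k^2 + 2*k*Real.sin θ + 1))^3) * (k + Real.sin θ)^2
          + 2 * l₀ * Real.sin θ^2)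
        / (4 * l₁ * l₂ / ((Real.sqrt (k^2 - 2*k*Real.sin θ + 1))^3
              * (Real.sqrt (k^2 + 2*k*Real.sin θ + 1))^3)
          + 2 * l₀ * (l₁ / (Real.sqrt (k^2 - 2*k*Real.sin θ + 1))^3
              + l₂ / (Real.sqrt (k^2 + 2*k*Real.sin θ + 1))^3))
      ≥ m₀ * g * (s - 2 * l₀) * Real.cos κ^2
          / (4 * l₁ * l₂ / Real.cos θstar^3 + 2 * l₀ * l₁ + 2 * l₀ * l₂) ∧
    0 < m₀ * g * (s - 2 * l₀) * Real.cos κ^2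
          / (4 * l₁ * l₂ / Real.cos θstar^3 + 2 * l₀ * l₁ + 2 * l₀ * l₂) := by
  have hπ : (0:ℝ) < π/2 := by positivity
  have hθπ : |θ| < π/2 := lt_of_le_of_lt hθ hθstar'
  have hθ1 : -(π/2) < θ := by have := abs_lt.mp hθπ; linarith [this.1]
  have hθ2 : θ < π/2 := (abs_lt.mp hθπ).2
  set t := Real.sin θ with htdef
  set c := Real.cos θ with hcdef
  have hc : 0 < c := Real.cos_pos_of_mem_Ioo ⟨hθ1, hθ2⟩
  have hc1 : c ≤ 1 := Real.cos_le_one θ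
  set cs := Real.cos θstar with hcsdef
  have hcs : 0 < cs := Real.cos_pos_of_mem_Ioo ⟨by linarith, hθstar'⟩
  have hcsc : cs ≤ c := by
    have h1 : Real.cos θstar ≤ Real.cos |θ| :=
      Real.cos_le_cos_of_nonneg_of_le_pi (abs_nonneg θ) (by linarith [Real.pi_pos]) hθ
    rw [Real.cos_abs] at h1
    exact h1
  have hck : 0 < Real.cos κ := Real.cos_pos_of_mem_Ioo ⟨by linarith, hκ'⟩
  have htc : t^2 + c^2 = 1 := Real.sin_sq_add_cos_sq θ
  have htB := aux_tb t c htc hc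
  have ht1 : t < 1 := htB.2
  have ht2 : -1 < t := htB.1
  have ht2' : t^2 < 1 := by nlinarith
  have htc' : (-t)^2 + c^2 = 1 := by rw [neg_pow]; simpa using htc
  have ht2'' : (-t)^2 < 1 := by rw [neg_pow]; simpa using ht2'
  have hk0 : (0:ℝ) < k := by linarith
  have hupos : 0 < k^2 - 2*k*t + 1 := aux_pos k t ht2'
  have hvpos : 0 < k^2 + 2*k*t + 1 := by
    have := aux_pos k (-t) ht2''; linarith
  set u := Real.sqrt (k^2 - 2*k*t + 1) with hudef
  set v := Real.sqrt (k^2 + 2*k*t + 1) with hvdef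
  have hu : 0 < u := Real.sqrt_pos.mpr hupos
  have hv : 0 < v := Real.sqrt_pos.mpr hvpos
  have hkc : 0 < k * c := mul_pos hk0 hc
  -- u ≥ k c, v ≥ k c
  have hku : k * c ≤ u := by
    have h := Real.sqrt_le_sqrt (aux_kc k t c htc)
    rwa [Real.sqrt_sq hkc.le] at h
  have hkv : k * c ≤ v := by
    have hx : (k*c)^2 ≤ k^2 + 2*k*t + 1 := by
      have := aux_kc k (-t) c htc'; linarith
    have h := Real.sqrt_le_sqrt hx
    rwa [Real.sqrt_sq hkc.le] at h
  -- angle bounds cleared of denominators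
  have h1 : Real.cos κ * u ≤ k - t := by
    have := (le_div_iff₀ hu).mp hangle1; linarith
  have h2 : Real.cos κ * v ≤ k + t := by
    have := (le_div_iff₀ hv).mp hangle2; linarith
  clear_value t c cs u v
  set A := l₁ / u ^ 3 * (k - t) ^ 2 + l₂ / v ^ 3 * (k + t) ^ 2 + 2 * l₀ * t ^ 2 with hAdef
  set B := 4 * l₁ * l₂ / (u ^ 3 * v ^ 3) + 2 * l₀ * (l₁ / u ^ 3 + l₂ / v ^ 3) with hBdef
  set D := 4 * l₁ * l₂ / cs ^ 3 + 2 * l₀ * l₁ + 2 * l₀ * l₂ with hDdef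
  clear_value A B D
  have hB : 0 < B := by rw [hBdef]; positivity
  have hD : 0 < D := by rw [hDdef]; positivity
  have hX : 0 < k^3 * c^2 := by positivity
  -- numerator lower bound:  cos²κ (s - 2 l₀) ≤ A c
  have e1 : Real.cos κ^2 * (l₁/u) ≤ l₁ / u ^ 3 * (k - t) ^ 2 := by
    have h1' : (Real.cos κ * u)^2 ≤ (k - t)^2 :=
      pow_le_pow_left₀ (mul_nonneg hck.le hu.le) h1 2
    calc Real.cos κ^2 * (l₁/u) = l₁ / u^3 * (Real.cos κ * u)^2 := by
          field_simp
      _ ≤ l₁ / u^3 * (k - t)^2 := by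
          apply mul_le_mul_of_nonneg_left h1' (by positivity)
  have e2 : Real.cos κ^2 * (l₂/v) ≤ l₂ / v ^ 3 * (k + t) ^ 2 := by
    have h2' : (Real.cos κ * v)^2 ≤ (k + t)^2 :=
      pow_le_pow_left₀ (mul_nonneg hck.le hv.le) h2 2
    calc Real.cos κ^2 * (l₂/v) = l₂ / v^3 * (Real.cos κ * v)^2 := by
          field_simp
      _ ≤ l₂ / v^3 * (k + t)^2 := by
          apply mul_le_mul_of_nonneg_left h2' (by positivity)
  have hA : Real.cos κ^2 * (l₁/u) + Real.cos κ^2 * (l₂/v) ≤ A := by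
    have h0 : 0 ≤ 2 * l₀ * t^2 := by positivity
    rw [hAdef]; linarith
  have hAc : Real.cos κ^2 * (s - 2*l₀) ≤ A * c := by
    have hmul := mul_le_mul_of_nonneg_right hA hc.le
    have hid : (Real.cos κ^2 * (l₁/u) + Real.cos κ^2 * (l₂/v)) * c
        = Real.cos κ^2 * (s - 2*l₀*c) := by
      have hcc : l₁ * c / u + l₂ * c / v = s - 2*l₀*c := by linarith
      linear_combination Real.cos κ^2 * hcc
    rw [hid] at hmul
    have h3 : 0 ≤ Real.cos κ^2 * (2*l₀*(1 - c)) := by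
      have h4 : 0 ≤ 1 - c := by linarith
      positivity
    linarith
  -- denominator upper bound: k³ c³ B ≤ D
  have hBD : k^3 * c^3 * B ≤ D := by
    have hcb : (k*c)^3 ≤ u^3 := pow_le_pow_left₀ hkc.le hku 3
    have hcb' : (k*c)^3 ≤ v^3 := pow_le_pow_left₀ hkc.le hkv 3
    have huv : cs * (k*c) ≤ u * v := by
      have h4 : cs ≤ k * c := by
        have h5 := mul_le_mul_of_nonneg_right hk hc.le
        rw [one_mul] at h5; linarith
      have h5 : (k*c) * (k*c) ≤ u * v := mul_le_mul hku hkv hkc.le hu.le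
      have h6 : cs * (k*c) ≤ (k*c) * (k*c) := mul_le_mul_of_nonneg_right h4 hkc.le
      linarith
    have huv3 : (cs * (k*c))^3 ≤ (u*v)^3 :=
      pow_le_pow_left₀ (mul_nonneg hcs.le hkc.le) huv 3
    have t1 : k^3 * c^3 * (4 * l₁ * l₂ / (u ^ 3 * v ^ 3)) ≤ 4 * l₁ * l₂ / cs^3 := by
      rw [show k^3 * c^3 * (4 * l₁ * l₂ / (u ^ 3 * v ^ 3))
            = k^3 * c^3 * (4 * l₁ * l₂) / (u ^ 3 * v ^ 3) by ring,
        div_le_div_iff₀ (by positivity) (by positivity)]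
      have hgt : 0 ≤ 4*l₁*l₂*((u*v)^3 - (cs*(k*c))^3) :=
        mul_nonneg (by positivity) (by linarith)
      linarith [hgt]
    have t2 : k^3 * c^3 * (2 * l₀ * (l₁ / u ^ 3)) ≤ 2 * l₀ * l₁ := by
      rw [show k^3 * c^3 * (2 * l₀ * (l₁ / u ^ 3))
            = k^3 * c^3 * (2 * l₀ * l₁) / u ^ 3 by ring,
        div_le_iff₀ (by positivity)]
      have hgt : 0 ≤ 2*l₀*l₁*(u^3 - (k*c)^3) := mul_nonneg (by positivity) (by linarith)
      linarith [hgt]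
    have t3 : k^3 * c^3 * (2 * l₀ * (l₂ / v ^ 3)) ≤ 2 * l₀ * l₂ := by
      rw [show k^3 * c^3 * (2 * l₀ * (l₂ / v ^ 3))
            = k^3 * c^3 * (2 * l₀ * l₂) / v ^ 3 by ring,
        div_le_iff₀ (by positivity)]
      have hgt : 0 ≤ 2*l₀*l₂*(v^3 - (k*c)^3) := mul_nonneg (by positivity) (by linarith)
      linarith [hgt]
    rw [hBdef, hDdef]; linarith [t1, t2, t3]
  -- positivity of RHS
  have hRHSnum : 0 < m₀ * g * (s - 2 * l₀) * Real.cos κ^2 :=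
    mul_pos (mul_pos (mul_pos hm₀ hg) (by linarith)) (pow_pos hck 2)
  refine ⟨?_, div_pos hRHSnum hD⟩
  rw [ge_iff_le, div_le_div_iff₀ hD hB, div_mul_eq_mul_div, div_mul_eq_mul_div,
    le_div_iff₀ hX]
  have hnn1 : 0 ≤ Real.cos κ^2 * (s - 2*l₀) := by
    have h5 : (0:ℝ) ≤ s - 2*l₀ := by linarith
    positivity
  have P : (Real.cos κ^2 * (s - 2*l₀)) * (k^3 * c^3 * B) ≤ (A * c) * D :=
    mul_le_mul hAc hBD (by positivity) (le_trans hnn1 hAc)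
  have Q : (Real.cos κ^2 * (s - 2*l₀)) * (k^3 * c^2 * B) ≤ A * D := by
    have hP' : ((Real.cos κ^2 * (s - 2*l₀)) * (k^3 * c^2 * B)) * c ≤ (A * D) * c := by
      linarith [P]
    exact le_of_mul_le_mul_right hP' hc
  linarith [mul_le_mul_of_nonneg_left Q (mul_pos hm₀ hg).le]
end

section
/- (Theorem 2, vertical force-consensus subsystem UUB.) Let k₄, k_f > 0, let σ : ℝ → ℝ be differentiable with σ(0) = 0 and 0 < σ̲ ≤ σ'(x) ≤ σ̄ for all x ∈ ℝ for constants σ̲, σ̄ > 0; let τ : [0,∞) → ℝ be continuous with 0 < τ̲ ≤ τ(t) ≤ τ̄ for all t ≥ 0 for constants τ̲, τ̄ > 0; and let w : [0,∞) → ℝ be continuous with |w(t)| ≤ w̄ for all t ≥ 0. Suppose there exist ε₁, γ > 0 such that k₄ > ε₁ + τ̄/(4γ) and k_f < ε₁ σ̲ /(γ σ̄²). Then there exists b > 0 such that every twice-differentiable solution y : [0,∞) → ℝ of y''(t) = -k₄ y'(t) - k_f τ(t) σ(y(t)) + w(t) is uniformly ultimately bounded together with its derivative: there exists T ≥ 0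 with |y(t)| + |y'(t)| ≤ b for all t ≥ T. -/
/-!
Write `V = ½ (k₄ ε₁ y² + 2 ε₁ y y' + y'²) = ½ (ε₁ (k₄ - ε₁) y² + (ε₁ y + y')²)`. By the mean
value theorem `σ(y) = s y` with `s ∈ [σ̲, σ̄]`, and a Young inequality on the cross term
`k_f τ σ(y) y'` gives, along solutions, `V' ≤ -α y'² - β y² + w (ε₁ y + y')` with `α, β > 0`
precisely under the two gain conditions. Absorbing the bounded disturbance by Young's inequality
once more yields `V' ≤ -a V + K`, so by Grönwall `V` eventually stays below `K / a + 1`, a level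
that does not depend on the solution and bounds `|y| + |y'|`.
-/

open Set Filter Topology

theorem exists_eq_mul_of_deriv_mem_Icc {f : ℝ → ℝ} {a b : ℝ} (hf : Differentiable ℝ f)
    (hf0 : f 0 = 0) (hf' : ∀ x, deriv f x ∈ Icc a b) (u : ℝ) : ∃ s ∈ Icc a b, f u = s * u := by
  rcases eq_or_ne u 0 with rfl | hu
  · exact ⟨deriv f 0, hf' 0, by rw [hf0, mul_zero]⟩
  have hmvt : ∀ p q, p < q → ∃ c, deriv f c = slope f p q := fun p q hpq =>
    let ⟨c, _, hc⟩ := exists_deriv_eq_slope' f hpq hf.continuous.continuousOn hf.differentiableOn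
    ⟨c, hc⟩
  obtain ⟨c, hc⟩ : ∃ c, deriv f c = slope f 0 u := by
    rcases hu.lt_or_gt with hu | hu
    · simpa only [slope_comm] using hmvt u 0 hu
    · exact hmvt 0 u hu
  refine ⟨deriv f c, hf' c, ?_⟩
  rw [hc, slope_def_field, hf0]
  field_simp
  ring

theorem mul_le_half_mul_sq_add_of_abs_le {W X B c : ℝ} (hc : 0 < c) (hW : |W| ≤ B) :
    W * X ≤ c / 2 * X ^ 2 + B ^ 2 / (2 * c) := by
  have hWX : W * X ≤ B * |X| :=
    (le_abs_self _).trans (by rw [abs_mul]; exact mul_le_mul_of_nonneg_right hW (abs_nonneg X))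
  have hgap : c / 2 * X ^ 2 + B ^ 2 / (2 * c) - B * |X| = (c * |X| - B) ^ 2 / (2 * c) := by
    field_simp
    rw [← sq_abs X]
    ring
  have : 0 ≤ (c * |X| - B) ^ 2 / (2 * c) := by positivity
  linarith

theorem eventually_le_of_hasDerivAt_le_neg_mul_add {V V' : ℝ → ℝ} {a K M : ℝ} (ha : 0 < a)
    (hM : K / a < M) (hV : ∀ t, 0 ≤ t → HasDerivAt V (V' t) t)
    (hV' : ∀ t, 0 ≤ t → V' t ≤ -a * V t + K) : ∀ᶠ t in atTop, V t ≤ M := by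
  have hgronwall : ∀ t, 0 ≤ t → V t ≤ gronwallBound (V 0) (-a) K t := fun t ht => by
    simpa using le_gronwallBound_of_liminf_deriv_right_le
      (fun x hx => (hV x hx.1).continuousAt.continuousWithinAt)
      (fun x hx _ hr => (hV x hx.1).hasDerivWithinAt.liminf_right_slope_le hr) le_rfl
      (fun x hx => hV' x hx.1) t ⟨ht, le_rfl⟩
  have hdecay : Tendsto (fun t => Real.exp (-a * t)) atTop (𝓝 0) :=
    Real.tendsto_exp_atBot.comp (tendsto_id.const_mul_atTop_of_neg (neg_neg_of_pos ha))
  have hlim : Tendsto (gronwallBound (V 0) (-a) K) atTop (𝓝 (K / a)) := by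
    rw [gronwallBound_of_K_ne_0 (neg_ne_zero.2 ha.ne')]
    convert (hdecay.const_mul (V 0)).add ((hdecay.sub_const 1).const_mul (K / -a)) using 2
    field_simp
    ring
  filter_upwards [hlim.eventually (gt_mem_nhds hM), eventually_ge_atTop 0] with t hlt ht
  exact (hgronwall t ht).trans hlt.le

noncomputable def consensusLyapunov (k ε y z : ℝ) : ℝ :=
  (k * ε * y ^ 2 + 2 * ε * y * z + z ^ 2) / 2

theorem hasDerivAt_consensusLyapunov (k ε : ℝ) {y z : ℝ → ℝ} {z' t : ℝ}
    (hy : HasDerivAt y (z t) t) (hz : HasDerivAt z z' t) :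
    HasDerivAt (fun s => consensusLyapunov k ε (y s) (z s))
      (k * ε * y t * z t + ε * z t ^ 2 + (ε * y t + z t) * z') t := by
  unfold consensusLyapunov
  refine (((((hy.fun_pow 2).const_mul (k * ε)).add ((hy.const_mul (2 * ε)).mul hz)).add
    (hz.fun_pow 2)).div_const 2).congr_deriv ?_
  push_cast
  ring

theorem consensusLyapunov_le {k ε : ℝ} (hk : 0 ≤ k) (hε : 0 ≤ ε) (y z : ℝ) :
    consensusLyapunov k ε y z ≤ (k * ε + ε + 1) / 2 * (y ^ 2 + z ^ 2) := by
  unfold consensusLyapunov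
  nlinarith [mul_nonneg hε (sq_nonneg (y - z)), mul_nonneg (mul_nonneg hk hε) (sq_nonneg z),
    sq_nonneg y]

theorem abs_add_abs_le_of_consensusLyapunov_le {k ε y z M : ℝ} (hε : 0 < ε) (hεk : ε < k)
    (hV : consensusLyapunov k ε y z ≤ M) :
    |y| + |z| ≤ (1 + ε) * √(2 * M / (ε * (k - ε))) + √(2 * M) := by
  have hc : 0 < ε * (k - ε) := mul_pos hε (sub_pos.2 hεk)
  have hsplit : 2 * consensusLyapunov k ε y z = ε * (k - ε) * y ^ 2 + (ε * y + z) ^ 2 := by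
    unfold consensusLyapunov; ring
  have hy : |y| ≤ √(2 * M / (ε * (k - ε))) := by
    refine Real.abs_le_sqrt ?_
    rw [le_div_iff₀ hc]
    nlinarith [sq_nonneg (ε * y + z)]
  have hεyz : |ε * y + z| ≤ √(2 * M) :=
    Real.abs_le_sqrt (by nlinarith [mul_nonneg hc.le (sq_nonneg y)])
  have hz : |z| ≤ |ε * y + z| + ε * |y| := by
    calc |z| = |(ε * y + z) - ε * y| := by ring_nf
      _ ≤ |ε * y + z| + |ε * y| := abs_sub _ _
      _ = |ε * y + z| + ε * |y| := by rw [abs_mul, abs_of_pos hε]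
  nlinarith

theorem nominal_dissipation_le {k ε kf γ σlo σhi τlo τhi s τ Y Z : ℝ} (hkf : 0 ≤ kf)
    (hγ : 0 < γ) (hσlo : 0 < σlo) (hτlo : 0 ≤ τlo)
    (hs : s ∈ Icc σlo σhi) (hτ : τ ∈ Icc τlo τhi) (hgain : γ * kf * σhi ≤ ε) :
    -(k - ε) * Z ^ 2 - kf * τ * (s * Y) * (ε * Y + Z) ≤
      -(k - ε - τhi / (4 * γ)) * Z ^ 2 - kf * τlo * σlo ^ 2 * (ε - γ * kf * σhi) / σhi * Y ^ 2 := by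
  obtain ⟨hs₁, hs₂⟩ := hs
  obtain ⟨hτ₁, hτ₂⟩ := hτ
  have hσhi : 0 < σhi := hσlo.trans_le hs₁ |>.trans_le hs₂
  have hgap : (-(k - ε - τhi / (4 * γ)) * Z ^ 2
        - kf * τlo * σlo ^ 2 * (ε - γ * kf * σhi) / σhi * Y ^ 2)
      - (-(k - ε) * Z ^ 2 - kf * τ * (s * Y) * (ε * Y + Z))
      = (τhi - τ) * Z ^ 2 / (4 * γ) + τ * (2 * γ * kf * (s * Y) + Z) ^ 2 / (4 * γ)
        + kf * τ * ε * s * (σhi - s) * Y ^ 2 / σhi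
        + kf * (ε - γ * kf * σhi) * (τ * s ^ 2 - τlo * σlo ^ 2) * Y ^ 2 / σhi := by
    field_simp
    ring
  have hτ : 0 ≤ τ := hτlo.trans hτ₁
  have hs : 0 ≤ s := hσlo.le.trans hs₁
  have hε : 0 ≤ ε := le_trans (by positivity) hgain
  have hsσ : τlo * σlo ^ 2 ≤ τ * s ^ 2 := by gcongr
  rw [← sub_nonneg, hgap]
  refine add_nonneg (add_nonneg (add_nonneg ?_ (by positivity)) ?_) ?_
  · exact div_nonneg (mul_nonneg (by linarith) (sq_nonneg Z)) (by positivity)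
  · have := sub_nonneg.2 hs₂
    positivity
  · have := sub_nonneg.2 hgain
    have := sub_nonneg.2 hsσ
    positivity

theorem exists_consensusLyapunov_dissipation {k ε kf γ σlo σhi τlo τhi wbar : ℝ}
    (hk : 0 ≤ k) (hε : 0 < ε) (hkf : 0 < kf) (hγ : 0 < γ) (hσlo : 0 < σlo) (hσhi : 0 < σhi)
    (hτlo : 0 < τlo) (hdamp : ε + τhi / (4 * γ) < k) (hgain : γ * kf * σhi < ε) :
    ∃ a > 0, ∃ K ≥ 0, ∀ Y Z s τ W : ℝ, s ∈ Icc σlo σhi → τ ∈ Icc τlo τhi → |W| ≤ wbar →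
      -(k - ε) * Z ^ 2 + (ε * Y + Z) * (-kf * τ * (s * Y) + W)
        ≤ -a * consensusLyapunov k ε Y Z + K := by
  set α := k - ε - τhi / (4 * γ)
  set β := kf * τlo * σlo ^ 2 * (ε - γ * kf * σhi) / σhi
  have hα : 0 < α := by simp only [α]; linarith
  have hβ : 0 < β := by have := sub_pos.2 hgain; positivity
  have hden : 0 < k * ε + ε + 1 := by positivity
  refine ⟨min α β / (k * ε + ε + 1), by positivity,
    (ε * wbar) ^ 2 / (2 * β) + wbar ^ 2 / (2 * α), by positivity, ?_⟩
  intro Y Z s τ W hs hτ hW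
  have hsector := nominal_dissipation_le (k := k) (Y := Y) (Z := Z) hkf.le hγ hσlo hτlo.le hs hτ
    hgain.le
  have hεW : |ε * W| ≤ ε * wbar := by
    rw [abs_mul, abs_of_pos hε]; exact mul_le_mul_of_nonneg_left hW hε.le
  have hY := mul_le_half_mul_sq_add_of_abs_le (X := Y) hβ hεW
  have hZ := mul_le_half_mul_sq_add_of_abs_le (X := Z) hα hW
  have hV : min α β / (k * ε + ε + 1) * consensusLyapunov k ε Y Z
      ≤ β / 2 * Y ^ 2 + α / 2 * Z ^ 2 :=
    calc min α β / (k * ε + ε + 1) * consensusLyapunov k ε Y Z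
        ≤ min α β / (k * ε + ε + 1) * ((k * ε + ε + 1) / 2 * (Y ^ 2 + Z ^ 2)) := by
          gcongr; exact consensusLyapunov_le hk hε.le Y Z
      _ = min α β / 2 * (Y ^ 2 + Z ^ 2) := by field_simp
      _ ≤ β / 2 * Y ^ 2 + α / 2 * Z ^ 2 := by
          nlinarith [min_le_left α β, min_le_right α β, sq_nonneg Y, sq_nonneg Z]
  linarith

theorem stmt_17_general (k₄ kf σlo σhi τlo τhi wbar ε₁ γ : ℝ)
    (hk₄ : 0 < k₄) (hkf : 0 < kf)
    (hσlo : 0 < σlo) (hσhi : 0 < σhi)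
    (hτlo : 0 < τlo) (hτhi : 0 < τhi)
    (hε₁ : 0 < ε₁) (hγ : 0 < γ)
    (σ : ℝ → ℝ) (hσdiff : Differentiable ℝ σ) (hσ0 : σ 0 = 0)
    (hσ' : ∀ x : ℝ, σlo ≤ deriv σ x ∧ deriv σ x ≤ σhi)
    (τ w : ℝ → ℝ)
    (hτbnd : ∀ t : ℝ, 0 ≤ t → τlo ≤ τ t ∧ τ t ≤ τhi)
    (hwbnd : ∀ t : ℝ, 0 ≤ t → |w t| ≤ wbar)
    (hgain1 : ε₁ + τhi / (4 * γ) < k₄)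
    (hgain2 : kf < ε₁ * σlo / (γ * σhi^2)) :
    ∃ b > 0, ∀ y : ℝ → ℝ,
      (∀ t : ℝ, 0 ≤ t → DifferentiableAt ℝ y t) →
      (∀ t : ℝ, 0 ≤ t → HasDerivAt (deriv y)
        (-k₄ * deriv y t - kf * τ t * σ (y t) + w t) t) →
      ∃ T : ℝ, 0 ≤ T ∧ ∀ t : ℝ, T ≤ t → |y t| + |deriv y t| ≤ b := by
  have hτ : 0 < τhi / (4 * γ) := by positivity
  have hgain : γ * kf * σhi < ε₁ := by
    have hσ : σlo ≤ σhi := (hσ' 0).1.trans (hσ' 0).2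
    rw [lt_div_iff₀ (by positivity)] at hgain2
    nlinarith
  obtain ⟨a, ha, K, hK, hdiss⟩ := exists_consensusLyapunov_dissipation (wbar := wbar) hk₄.le hε₁
    hkf hγ hσlo hσhi hτlo hgain1 hgain
  set M := K / a + 1
  refine ⟨(1 + ε₁) * √(2 * M / (ε₁ * (k₄ - ε₁))) + √(2 * M),
    add_pos_of_nonneg_of_pos (by positivity) (Real.sqrt_pos.2 (by positivity)), fun y hy hy' => ?_⟩
  have hV : ∀ t, 0 ≤ t → HasDerivAt (fun s => consensusLyapunov k₄ ε₁ (y s) (deriv y s)) _ t :=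
    fun t ht => hasDerivAt_consensusLyapunov k₄ ε₁ (hy t ht).hasDerivAt (hy' t ht)
  have hV' : ∀ t, 0 ≤ t → k₄ * ε₁ * y t * deriv y t + ε₁ * deriv y t ^ 2
      + (ε₁ * y t + deriv y t) * (-k₄ * deriv y t - kf * τ t * σ (y t) + w t)
      ≤ -a * consensusLyapunov k₄ ε₁ (y t) (deriv y t) + K := by
    intro t ht
    obtain ⟨s, hs, hσy⟩ := exists_eq_mul_of_deriv_mem_Icc hσdiff hσ0 hσ' (y t)
    have := hdiss (y t) (deriv y t) s (τ t) (w t) hs (hτbnd t ht) (hwbnd t ht)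
    rw [← hσy] at this
    linear_combination this
  obtain ⟨T, hT⟩ := eventually_atTop.1 (eventually_le_of_hasDerivAt_le_neg_mul_add ha
    (lt_add_one _) hV hV')
  exact ⟨max T 0, le_max_right _ _, fun t ht => abs_add_abs_le_of_consensusLyapunov_le hε₁
    (by linarith) (hT t (le_of_max_le_left ht))⟩

/-- **Theorem 2.** Uniform ultimate boundedness of the vertical
force-consensus subsystem `y'' = -k₄ y' - k_f τ(t) σ(y) + w(t)`, where `σ` is
sector-bounded (`0 < σ̲ ≤ σ' ≤ σ̄`, `σ(0) = 0`), `0 < τ̲ ≤ τ(t) ≤ τ̄`,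
`|w(t)| ≤ w̄`, and the gains satisfy `k₄ > ε₁ + τ̄/(4γ)` and
`k_f < ε₁ σ̲/(γ σ̄²)`. -/
theorem stmt_17 (k₄ kf σlo σhi τlo τhi wbar ε₁ γ : ℝ)
    (hk₄ : 0 < k₄) (hkf : 0 < kf)
    (hσlo : 0 < σlo) (hσhi : 0 < σhi)
    (hτlo : 0 < τlo) (hτhi : 0 < τhi)
    (hε₁ : 0 < ε₁) (hγ : 0 < γ)
    (σ : ℝ → ℝ) (hσdiff : Differentiable ℝ σ) (hσ0 : σ 0 = 0)
    (hσ' : ∀ x : ℝ, σlo ≤ deriv σ x ∧ deriv σ x ≤ σhi)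
    (τ w : ℝ → ℝ)
    (hτcont : ContinuousOn τ (Set.Ici 0))
    (hτbnd : ∀ t : ℝ, 0 ≤ t → τlo ≤ τ t ∧ τ t ≤ τhi)
    (hwcont : ContinuousOn w (Set.Ici 0))
    (hwbnd : ∀ t : ℝ, 0 ≤ t → |w t| ≤ wbar)
    (hgain1 : ε₁ + τhi / (4 * γ) < k₄)
    (hgain2 : kf < ε₁ * σlo / (γ * σhi^2)) :
    ∃ b > 0, ∀ y : ℝ → ℝ,
      (∀ t : ℝ, 0 ≤ t → DifferentiableAt ℝ y t) →
      (∀ t : ℝ, 0 ≤ t → HasDerivAt (deriv y)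
        (-k₄ * deriv y t - kf * τ t * σ (y t) + w t) t) →
      ∃ T : ℝ, 0 ≤ T ∧ ∀ t : ℝ, T ≤ t → |y t| + |deriv y t| ≤ b :=
  stmt_17_general k₄ kf σlo σhi τlo τhi wbar ε₁ γ hk₄ hkf hσlo hσhi hτlo hτhi hε₁ hγ σ hσdiff hσ0
    hσ' τ w hτbnd hwbnd hgain1 hgain2
end
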